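/- arXiv:1205.1174 — 9 statements merged into one kernel-verified Lean document; each statement's English description precedes it below -/
import Mathlib

section
/- Let (X, μ) be a standard Borel probability space and let ρ be a measurable semimetric on X. Then the following conditions are equivalent: (1) ρ is admissible, i.e., there is a subset X₁ ⊆ X of full measure such that (X₁, ρ) is separable; (2) for every ε>0 the ε-entropy H_ε(ρ, μ) is finite; (4) for μ-almost all x ∈ X and every ε>0, the ball {y ∈ X : ρ(x,y) < ε} has positive μ-measure; (5) for every ε>0 the space X can be written as a union X₀ ∪ X₁ ∪ … ∪ X_k of measurable sets with μ(X₀) < ε and essential ρ-diameter of X_j less than ε for j=1,…,k; (6) for every measurable set A ⊆ X of positive measure, the essential infimum of ρ over A×A is zero. -/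
open MeasureTheory Filter Function Set
open scoped ENNReal

/-- A semimetric on `X`: a nonnegative function vanishing on the diagonal, symmetric and
satisfying the triangle inequality for all points. -/
def IsSemimetric {X : Type*} (ρ : X → X → ℝ) : Prop :=
  (∀ x y, 0 ≤ ρ x y) ∧ (∀ x, ρ x x = 0) ∧ (∀ x y, ρ x y = ρ y x) ∧
    ∀ x y z, ρ x z ≤ ρ x y + ρ y z

/-- A metric on `X`: a semimetric that separates points. -/
def IsMetricFun {X : Type*} (ρ : X → X → ℝ) : Prop :=
  IsSemimetric ρ ∧ ∀ x y, ρ x y = 0 ↔ x = y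

/-- The semimetric space `(S, ρ)` is separable. -/
def SeparableOn {X : Type*} (ρ : X → X → ℝ) (S : Set X) : Prop :=
  ∃ D : Set X, D ⊆ S ∧ D.Countable ∧ ∀ x ∈ S, ∀ ε : ℝ, 0 < ε → ∃ y ∈ D, ρ x y < ε

/-- A semimetric is admissible for `(X, μ)` if it is measurable on `(X × X, μ × μ)` and
separable on a subset of full measure. -/
def Admissible {X : Type*} [MeasurableSpace X] (μ : Measure X) (ρ : X → X → ℝ) : Prop :=
  Measurable (Function.uncurry ρ) ∧
    ∃ S : Set X, MeasurableSet S ∧ μ Sᶜ = 0 ∧ SeparableOn ρ S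

/-- An `ε`-cover of size `k`: `X = X₀ ∪ X₁ ∪ ⋯ ∪ X_k` with `μ(X₀) < ε` and
`diam_ρ(X_j) < ε` for `j = 1, …, k`. -/
def IsEpsCover {X : Type*} [MeasurableSpace X] (μ : Measure X) (ρ : X → X → ℝ)
    (ε : ℝ) (k : ℕ) : Prop :=
  ∃ A : Fin (k + 1) → Set X, (∀ i, MeasurableSet (A i)) ∧ (⋃ i, A i) = Set.univ ∧
    μ (A 0) < ENNReal.ofReal ε ∧
    ∀ i, i ≠ 0 → ∀ x ∈ A i, ∀ y ∈ A i, ρ x y < ε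

/-- The `ε`-entropy of `(X, μ, ρ)`: the binary logarithm of the smallest size of an
`ε`-cover, and `∞` if there is no finite `ε`-cover. -/
noncomputable def epsEntropy {X : Type*} [MeasurableSpace X] (μ : Measure X)
    (ρ : X → X → ℝ) (ε : ℝ) : ℝ≥0∞ :=
  sInf {h : ℝ≥0∞ | ∃ k : ℕ, IsEpsCover μ ρ ε k ∧ h = ENNReal.ofReal (Real.logb 2 k)}

/-- The m-norm of `f`: the infimum of the `L¹`-norms of measurable semimetrics
dominating `|f|` almost everywhere (`∞` if there is no such semimetric). -/
noncomputable def mnorm {X : Type*} [MeasurableSpace X] (μ : Measure X)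
    (f : X → X → ℝ) : ℝ≥0∞ :=
  sInf {c : ℝ≥0∞ | ∃ ρ : X → X → ℝ, IsSemimetric ρ ∧ Measurable (Function.uncurry ρ) ∧
    (∀ᵐ p ∂(μ.prod μ), |f p.1 p.2| ≤ ρ p.1 p.2) ∧
    c = ∫⁻ p, ENNReal.ofReal (ρ p.1 p.2) ∂(μ.prod μ)}

/-- The m-distance between two functions. -/
noncomputable def mdist {X : Type*} [MeasurableSpace X] (μ : Measure X)
    (f g : X → X → ℝ) : ℝ≥0∞ :=
  mnorm μ fun x y => f x y - g x y

/-- The `L¹(X × X, μ × μ)` distance between two functions. -/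
noncomputable def L1dist {X : Type*} [MeasurableSpace X] (μ : Measure X)
    (f g : X → X → ℝ) : ℝ≥0∞ :=
  ∫⁻ p, ENNReal.ofReal |f p.1 p.2 - g p.1 p.2| ∂(μ.prod μ)

/-- The essential diameter of `A`: the essential supremum of `ρ` over `A × A`. -/
noncomputable def essDiam {X : Type*} [MeasurableSpace X] (μ : Measure X)
    (ρ : X → X → ℝ) (A : Set X) : ℝ≥0∞ :=
  essSup (fun p : X × X => ENNReal.ofReal (ρ p.1 p.2))
    ((μ.restrict A).prod (μ.restrict A))


/-! (1) ⇒ (2): the balls of radius `ε / 2` around a countable dense subset of `S` cover `X` up to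
a null set, so finitely many of them cover all of `X` but a set of measure `< ε`.
(2) ⇒ (5) is immediate, and (5) ⇒ (6) because a set `A` of measure `≥ ε` meets some piece of
essential diameter `< ε` in positive measure.
(6) ⇒ (4): if the points whose `r`-ball is null formed a set `N` of positive measure, Fubini would
give `ρ ≥ r` almost everywhere on `N × N`.
(4) ⇒ (1): for the points all of whose balls are non-null, a maximal `r`-separated subset is
countable, because the balls of radius `r / 2` around its points are disjoint and non-null. -/

open Topology

namespace IsSemimetric

variable {X : Type*} {ρ : X → X → ℝ}

lemma self (hρ : IsSemimetric ρ) (x : X) : ρ x x = 0 := hρ.2.1 x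

lemma comm (hρ : IsSemimetric ρ) (x y : X) : ρ x y = ρ y x := hρ.2.2.1 x y

lemma triangle (hρ : IsSemimetric ρ) (x y z : X) : ρ x z ≤ ρ x y + ρ y z := hρ.2.2.2 x y z

end IsSemimetric

lemma exists_separated_subset {X : Type*} {ρ : X → X → ℝ} (hρ : IsSemimetric ρ) (S : Set X)
    {r : ℝ} (hr : 0 < r) :
    ∃ T ⊆ S, T.Pairwise (fun x y => r ≤ ρ x y) ∧ ∀ x ∈ S, ∃ y ∈ T, ρ x y < r := by
  obtain ⟨T, hT⟩ := zorn_subset {T | T ⊆ S ∧ T.Pairwise fun x y => r ≤ ρ x y}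
    fun c hc hchain => ⟨⋃₀ c, ⟨sUnion_subset fun t ht => (hc ht).1,
      (pairwise_sUnion hchain.directedOn).2 fun t ht => (hc ht).2⟩, fun _ => subset_sUnion_of_mem⟩
  refine ⟨T, hT.prop.1, hT.prop.2, fun x hx => ?_⟩
  by_contra! hfar
  have hxT : x ∈ T := hT.mem_of_prop_insert ⟨insert_subset hx hT.prop.1,
    pairwise_insert.2 ⟨hT.prop.2, fun y hy _ => ⟨hfar y hy, hρ.comm y x ▸ hfar y hy⟩⟩⟩
  exact (hfar x hxT).not_gt (by rwa [hρ.self])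

def IsEssEpsCover {X : Type*} [MeasurableSpace X] (μ : Measure X) (ρ : X → X → ℝ)
    (ε : ℝ) (k : ℕ) : Prop :=
  ∃ A : Fin (k + 1) → Set X, (∀ i, MeasurableSet (A i)) ∧ (⋃ i, A i) = Set.univ ∧
    μ (A 0) < ENNReal.ofReal ε ∧
    ∀ i, i ≠ 0 → essDiam μ ρ (A i) < ENNReal.ofReal ε

section

variable {X : Type*} [MeasurableSpace X] {μ : Measure X} {ρ : X → X → ℝ}

lemma measurableSet_ball_of_measurable_uncurry (hmeas : Measurable (uncurry ρ)) (x : X)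
    (r : ℝ) : MeasurableSet {y | ρ x y < r} :=
  measurableSet_lt (hmeas.comp measurable_prodMk_left) measurable_const

lemma epsEntropy_ne_top_iff {ε : ℝ} : epsEntropy μ ρ ε ≠ ∞ ↔ ∃ k, IsEpsCover μ ρ ε k := by
  refine ⟨fun h => ?_, fun ⟨k, hk⟩ => ne_top_of_le_ne_top ENNReal.ofReal_ne_top
    (sInf_le ⟨k, hk, rfl⟩)⟩
  by_contra! hk
  exact h (sInf_eq_top.2 fun _ ⟨k, hcov, _⟩ => (hk k hcov).elim)

lemma exists_measure_compl_iUnion_le_lt [IsFiniteMeasure μ] {B : ℕ → Set X}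
    (hB : ∀ n, MeasurableSet (B n)) (hcov : μ (⋃ n, B n)ᶜ = 0) {δ : ℝ≥0∞} (hδ : 0 < δ) :
    ∃ N, μ (⋃ n ≤ N, B n)ᶜ < δ := by
  have hlim : Tendsto (fun N => μ (⋂ n ≤ N, (B n)ᶜ)) atTop (𝓝 0) := by
    rw [← hcov, compl_iUnion]
    exact tendsto_measure_iInter_le (fun n => (hB n).compl.nullMeasurableSet)
      ⟨0, measure_ne_top _ _⟩
  simpa only [compl_iUnion₂] using (hlim.eventually (gt_mem_nhds hδ)).exists

lemma exists_isEpsCover_of_ae_cover [IsFiniteMeasure μ] {ε : ℝ} (hε : 0 < ε) {B : ℕ → Set X}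
    (hB : ∀ n, MeasurableSet (B n)) (hdiam : ∀ n, ∀ x ∈ B n, ∀ y ∈ B n, ρ x y < ε)
    (hcov : μ (⋃ n, B n)ᶜ = 0) : ∃ k, IsEpsCover μ ρ ε k := by
  obtain ⟨N, hN⟩ := exists_measure_compl_iUnion_le_lt hB hcov (ENNReal.ofReal_pos.2 hε)
  refine ⟨N + 1, Fin.cons (⋃ n ≤ N, B n)ᶜ fun i => B i, fun i => ?_, ?_,
    by rwa [Fin.cons_zero], fun i hi => ?_⟩
  · cases i using Fin.cases with
    | zero => exact (MeasurableSet.biUnion (to_countable _) fun n _ => hB n).compl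
    | succ i => exact hB i
  · refine eq_univ_of_forall fun x => ?_
    by_cases hx : x ∈ ⋃ n ≤ N, B n
    · obtain ⟨n, hn, hxn⟩ := mem_iUnion₂.1 hx
      exact mem_iUnion.2 ⟨Fin.succ ⟨n, Nat.lt_succ_of_le hn⟩, hxn⟩
    · exact mem_iUnion.2 ⟨0, hx⟩
  · obtain ⟨j, rfl⟩ := Fin.exists_succ_eq.2 hi
    exact hdiam j

lemma exists_isEpsCover_of_separableOn [IsFiniteMeasure μ] [Nonempty X] (hρ : IsSemimetric ρ)
    (hmeas : Measurable (uncurry ρ)) {S : Set X} (hS : μ Sᶜ = 0) (hsep : SeparableOn ρ S)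
    {ε : ℝ} (hε : 0 < ε) : ∃ k, IsEpsCover μ ρ ε k := by
  obtain ⟨D, -, hDc, hdense⟩ := hsep
  obtain ⟨d, hDd⟩ := Set.countable_iff_exists_subset_range.1 hDc
  refine exists_isEpsCover_of_ae_cover hε (B := fun n => {y | ρ (d n) y < ε / 2})
    (fun n => measurableSet_ball_of_measurable_uncurry hmeas _ _) (fun n x hx y hy => ?_)
    (measure_mono_null (compl_subset_compl.2 fun x hx => ?_) hS)
  · have hx : ρ (d n) x < ε / 2 := hx
    have hy : ρ (d n) y < ε / 2 := hy
    linarith [hρ.triangle x (d n) y, hρ.comm x (d n)]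
  · obtain ⟨y, hyD, hxy⟩ := hdense x hx (ε / 2) (half_pos hε)
    obtain ⟨n, rfl⟩ := hDd hyD
    exact mem_iUnion.2 ⟨n, (hρ.comm _ _).trans_lt hxy⟩

lemma essDiam_le_of_forall_le [SFinite μ] {A : Set X} (hA : MeasurableSet A) {c : ℝ}
    (h : ∀ x ∈ A, ∀ y ∈ A, ρ x y ≤ c) : essDiam μ ρ A ≤ ENNReal.ofReal c := by
  refine essSup_le_of_ae_le _ ?_
  rw [Measure.prod_restrict]
  filter_upwards [ae_restrict_mem (hA.prod hA)] with p hp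
  exact ENNReal.ofReal_le_ofReal (h _ hp.1 _ hp.2)

lemma IsEpsCover.isEssEpsCover [SFinite μ] {ε ε' : ℝ} {k : ℕ} (h : IsEpsCover μ ρ ε k)
    (hεε' : ε < ε') : IsEssEpsCover μ ρ ε' k := by
  obtain ⟨A, hAm, hAu, hA0, hdiam⟩ := h
  have hε : 0 < ε := ENNReal.ofReal_pos.1 (zero_le.trans_lt hA0)
  refine ⟨A, hAm, hAu, hA0.trans_le (ENNReal.ofReal_le_ofReal hεε'.le), fun i hi => ?_⟩
  exact (essDiam_le_of_forall_le (hAm i) fun x hx y hy => (hdiam i hi x hx y hy).le).trans_lt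
    ((ENNReal.ofReal_lt_ofReal_iff (hε.trans hεε')).2 hεε')

lemma essInf_restrict_prod_le_essDiam [SFinite μ] {A B C : Set X} (hBA : B ⊆ A) (hBC : B ⊆ C)
    (hB : μ B ≠ 0) :
    essInf (fun p : X × X => ENNReal.ofReal (ρ p.1 p.2)) ((μ.restrict A).prod (μ.restrict A)) ≤
      essDiam μ ρ C := by
  have hac : ∀ {s t : Set X}, s ⊆ t →
      (μ.restrict s).prod (μ.restrict s) ≪ (μ.restrict t).prod (μ.restrict t) := fun h =>
    (Measure.restrict_mono h le_rfl).absolutelyContinuous.prod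
      (Measure.restrict_mono h le_rfl).absolutelyContinuous
  have hBB : (μ.restrict B).prod (μ.restrict B) univ ≠ 0 := by
    rw [← univ_prod_univ, Measure.prod_prod, Measure.restrict_apply_univ]
    exact mul_ne_zero hB hB
  have : NeZero ((μ.restrict B).prod (μ.restrict B)) := ⟨Measure.measure_univ_ne_zero.1 hBB⟩
  calc _ ≤ essInf (fun p : X × X => ENNReal.ofReal (ρ p.1 p.2))
        ((μ.restrict B).prod (μ.restrict B)) := essInf_antitone_measure (hac hBA)
    _ ≤ essSup (fun p : X × X => ENNReal.ofReal (ρ p.1 p.2))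
        ((μ.restrict B).prod (μ.restrict B)) := liminf_le_limsup
    _ ≤ essDiam μ ρ C := essSup_mono_measure (hac hBC)

lemma exists_ne_zero_measure_inter_of_iUnion_eq_univ {k : ℕ} {As : Fin (k + 1) → Set X}
    (hcov : ⋃ i, As i = univ) {A : Set X} (h : μ (As 0) < μ A) :
    ∃ i, i ≠ 0 ∧ μ (A ∩ As i) ≠ 0 := by
  by_contra! hnull
  refine h.not_ge ?_
  calc μ A ≤ μ (As 0 ∪ ⋃ (i) (_ : i ≠ 0), A ∩ As i) := measure_mono fun x hx => ?_
    _ ≤ μ (As 0) + μ (⋃ (i) (_ : i ≠ 0), A ∩ As i) := measure_union_le _ _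
    _ = μ (As 0) := by
      rw [measure_iUnion_null fun i => measure_iUnion_null fun hi => hnull i hi, add_zero]
  obtain ⟨i, hi⟩ := mem_iUnion.1 (hcov ▸ mem_univ x)
  by_cases h0 : i = 0
  · exact Or.inl (h0 ▸ hi)
  · exact Or.inr (mem_iUnion₂.2 ⟨i, h0, hx, hi⟩)

lemma essInf_lt_of_isEssEpsCover [SFinite μ] {ε : ℝ} {k : ℕ} (hcov : IsEssEpsCover μ ρ ε k)
    {A : Set X} (hA : ENNReal.ofReal ε ≤ μ A) :
    essInf (fun p : X × X => ENNReal.ofReal (ρ p.1 p.2)) ((μ.restrict A).prod (μ.restrict A)) <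
      ENNReal.ofReal ε := by
  obtain ⟨As, -, hAu, hAs0, hdiam⟩ := hcov
  obtain ⟨i, hi, hne⟩ := exists_ne_zero_measure_inter_of_iUnion_eq_univ hAu (hAs0.trans_le hA)
  exact (essInf_restrict_prod_le_essDiam inter_subset_left inter_subset_right hne).trans_lt
    (hdiam i hi)

lemma essInf_eq_zero_of_isEssEpsCover [IsFiniteMeasure μ]
    (hcov : ∀ ε : ℝ, 0 < ε → ∃ k, IsEssEpsCover μ ρ ε k) {A : Set X} (hA : 0 < μ A) :
    essInf (fun p : X × X => ENNReal.ofReal (ρ p.1 p.2))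
      ((μ.restrict A).prod (μ.restrict A)) = 0 := by
  refine le_antisymm (ENNReal.le_of_forall_pos_le_add fun δ hδ _ => ?_) zero_le
  have hε : 0 < min (δ : ℝ) (μ A).toReal :=
    lt_min hδ (ENNReal.toReal_pos hA.ne' (measure_ne_top μ A))
  obtain ⟨k, hk⟩ := hcov _ hε
  calc _ ≤ ENNReal.ofReal (min (δ : ℝ) (μ A).toReal) :=
        (essInf_lt_of_isEssEpsCover hk (ENNReal.ofReal_le_of_le_toReal (min_le_right _ _))).le
    _ ≤ 0 + δ := by
      rw [zero_add, ← ENNReal.ofReal_coe_nnreal]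
      exact ENNReal.ofReal_le_ofReal (min_le_left _ _)

lemma measure_setOf_measure_ball_eq_zero [SFinite μ] (hmeas : Measurable (uncurry ρ))
    (h : ∀ A : Set X, MeasurableSet A → 0 < μ A →
      essInf (fun p : X × X => ENNReal.ofReal (ρ p.1 p.2))
        ((μ.restrict A).prod (μ.restrict A)) = 0)
    {r : ℝ} (hr : 0 < r) : μ {x | μ {y | ρ x y < r} = 0} = 0 := by
  set N := {x | μ {y | ρ x y < r} = 0}
  have hball : MeasurableSet {p : X × X | ρ p.1 p.2 < r} := measurableSet_lt hmeas measurable_const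
  have hN : MeasurableSet N := measurable_measure_prodMk_left hball (measurableSet_singleton 0)
  by_contra hpos
  have hsmall : (μ.restrict N).prod (μ.restrict N) {p | ρ p.1 p.2 < r} = 0 := by
    rw [Measure.prod_apply hball]
    refine (lintegral_congr_ae ?_).trans lintegral_zero
    filter_upwards [ae_restrict_mem hN] with x hx
    exact nonpos_iff_eq_zero.1 ((Measure.restrict_le_self _).trans_eq hx)
  have hae : ∀ᵐ p ∂(μ.restrict N).prod (μ.restrict N),
      ENNReal.ofReal r ≤ ENNReal.ofReal (ρ p.1 p.2) :=
    measure_mono_null (fun p hp => (ENNReal.ofReal_lt_ofReal_iff hr).1 (not_le.1 hp)) hsmall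
  have := le_essInf_of_ae_le _ hae
  rw [h N hN (pos_iff_ne_zero.2 hpos)] at this
  exact (ENNReal.ofReal_pos.2 hr).not_ge this

lemma ae_measure_ball_pos [SFinite μ] (hmeas : Measurable (uncurry ρ))
    (h : ∀ A : Set X, MeasurableSet A → 0 < μ A →
      essInf (fun p : X × X => ENNReal.ofReal (ρ p.1 p.2))
        ((μ.restrict A).prod (μ.restrict A)) = 0) :
    ∀ᵐ x ∂μ, ∀ ε : ℝ, 0 < ε → 0 < μ {y | ρ x y < ε} := by
  have hnat : ∀ᵐ x ∂μ, ∀ n : ℕ, μ {y | ρ x y < 1 / ((n : ℝ) + 1)} ≠ 0 :=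
    ae_all_iff.2 fun n => ae_iff.2 <| by
      simpa only [not_not] using measure_setOf_measure_ball_eq_zero hmeas h Nat.one_div_pos_of_nat
  filter_upwards [hnat] with x hx ε hε
  obtain ⟨n, hn⟩ := exists_nat_one_div_lt hε
  exact (pos_iff_ne_zero.2 (hx n)).trans_le (measure_mono fun y hy => lt_trans hy hn)

lemma countable_of_pairwise_le_of_measure_ball_pos [SFinite μ] (hρ : IsSemimetric ρ)
    (hmeas : Measurable (uncurry ρ)) {T : Set X} {r : ℝ} (hT : T.Pairwise fun x y => r ≤ ρ x y)
    (hpos : ∀ x ∈ T, 0 < μ {y | ρ x y < r / 2}) : T.Countable := by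
  have hdisj : Pairwise (Disjoint on fun x : T => {y | ρ x y < r / 2}) := by
    intro a b hab
    refine Set.disjoint_left.2 fun z (hza : ρ a z < r / 2) (hzb : ρ b z < r / 2) => ?_
    have := hT a.2 b.2 (Subtype.coe_ne_coe.2 hab)
    linarith [hρ.triangle a z b, hρ.comm z b]
  have hcount := Measure.countable_meas_pos_of_disjoint_iUnion (μ := μ)
    (fun x : T => measurableSet_ball_of_measurable_uncurry hmeas x _) hdisj
  have hall : {x : T | 0 < μ {y | ρ x y < r / 2}} = univ := eq_univ_of_forall fun x => hpos x x.2
  rw [hall, countable_univ_iff] at hcount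
  exact countable_coe_iff.1 hcount

lemma separableOn_of_measure_ball_pos [SFinite μ] (hρ : IsSemimetric ρ)
    (hmeas : Measurable (uncurry ρ)) {S : Set X}
    (hS : ∀ x ∈ S, ∀ ε : ℝ, 0 < ε → 0 < μ {y | ρ x y < ε}) : SeparableOn ρ S := by
  choose T hTS hTsep hTnet using fun n : ℕ =>
    exists_separated_subset hρ S (Nat.one_div_pos_of_nat (α := ℝ) (n := n))
  refine ⟨⋃ n, T n, iUnion_subset hTS, countable_iUnion fun n =>
    countable_of_pairwise_le_of_measure_ball_pos hρ hmeas (hTsep n)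
      fun x hx => hS x (hTS n hx) _ (by positivity), fun x hx ε hε => ?_⟩
  obtain ⟨n, hn⟩ := exists_nat_one_div_lt hε
  obtain ⟨y, hy, hxy⟩ := hTnet n x hx
  exact ⟨y, mem_iUnion.2 ⟨n, hy⟩, hxy.trans hn⟩

lemma exists_separableOn_of_ae_measure_ball_pos [SFinite μ] (hρ : IsSemimetric ρ)
    (hmeas : Measurable (uncurry ρ))
    (h : ∀ᵐ x ∂μ, ∀ ε : ℝ, 0 < ε → 0 < μ {y | ρ x y < ε}) :
    ∃ S : Set X, MeasurableSet S ∧ μ Sᶜ = 0 ∧ SeparableOn ρ S := by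
  refine ⟨(toMeasurable μ {x | ¬∀ ε : ℝ, 0 < ε → 0 < μ {y | ρ x y < ε}})ᶜ,
    (measurableSet_toMeasurable _ _).compl,
    by rw [compl_compl, measure_toMeasurable]; exact ae_iff.1 h,
    separableOn_of_measure_ball_pos (μ := μ) hρ hmeas fun x hx => ?_⟩
  by_contra hbad
  exact hx (subset_toMeasurable _ _ hbad)

end

theorem statement2_general {X : Type*} [MeasurableSpace X]
    (μ : Measure X) [IsProbabilityMeasure μ] (ρ : X → X → ℝ)
    (hρ : IsSemimetric ρ) (hmeas : Measurable (Function.uncurry ρ)) :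
    List.TFAE
      [ ∃ S : Set X, MeasurableSet S ∧ μ Sᶜ = 0 ∧ SeparableOn ρ S,
        ∀ ε : ℝ, 0 < ε → epsEntropy μ ρ ε ≠ ∞,
        ∀ᵐ x ∂μ, ∀ ε : ℝ, 0 < ε → 0 < μ {y | ρ x y < ε},
        ∀ ε : ℝ, 0 < ε → ∃ (k : ℕ) (A : Fin (k + 1) → Set X),
          (∀ i, MeasurableSet (A i)) ∧ (⋃ i, A i) = Set.univ ∧
          μ (A 0) < ENNReal.ofReal ε ∧
          ∀ i, i ≠ 0 → essDiam μ ρ (A i) < ENNReal.ofReal ε,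
        ∀ A : Set X, MeasurableSet A → 0 < μ A →
          essInf (fun p : X × X => ENNReal.ofReal (ρ p.1 p.2))
            ((μ.restrict A).prod (μ.restrict A)) = 0 ] := by
  have := nonempty_of_isProbabilityMeasure μ
  tfae_have 1 → 2 := fun ⟨_, _, hS, hsep⟩ ε hε =>
    epsEntropy_ne_top_iff.2 (exists_isEpsCover_of_separableOn hρ hmeas hS hsep hε)
  tfae_have 2 → 4 := fun h ε hε =>
    let ⟨k, hk⟩ := epsEntropy_ne_top_iff.1 (h (ε / 2) (half_pos hε))
    ⟨k, hk.isEssEpsCover (half_lt_self hε)⟩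
  tfae_have 4 → 5 := fun h _ _ hA => essInf_eq_zero_of_isEssEpsCover h hA
  tfae_have 5 → 3 := ae_measure_ball_pos hmeas
  tfae_have 3 → 1 := exists_separableOn_of_ae_measure_ball_pos hρ hmeas
  tfae_finish

/-- equivalent characterizations of admissibility of a measurable
semimetric `ρ` on a standard probability space `(X, μ)`:
(1) separability on a set of full measure; (2) finiteness of the `ε`-entropy for all
`ε > 0`; (4) almost all `ε`-balls have positive measure; (5) covers by a set of small
measure and finitely many sets of small essential diameter; (6) the essential infimum of
`ρ` on `A × A` vanishes for every set `A` of positive measure. -/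
theorem statement2 {X : Type*} [MeasurableSpace X] [StandardBorelSpace X]
    (μ : Measure X) [IsProbabilityMeasure μ] (ρ : X → X → ℝ)
    (hρ : IsSemimetric ρ) (hmeas : Measurable (Function.uncurry ρ)) :
    List.TFAE
      [ ∃ S : Set X, MeasurableSet S ∧ μ Sᶜ = 0 ∧ SeparableOn ρ S,
        ∀ ε : ℝ, 0 < ε → epsEntropy μ ρ ε ≠ ∞,
        ∀ᵐ x ∂μ, ∀ ε : ℝ, 0 < ε → 0 < μ {y | ρ x y < ε},
        ∀ ε : ℝ, 0 < ε → ∃ (k : ℕ) (A : Fin (k + 1) → Set X),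
          (∀ i, MeasurableSet (A i)) ∧ (⋃ i, A i) = Set.univ ∧
          μ (A 0) < ENNReal.ofReal ε ∧
          ∀ i, i ≠ 0 → essDiam μ ρ (A i) < ENNReal.ofReal ε,
        ∀ A : Set X, MeasurableSet A → 0 < μ A →
          essInf (fun p : X × X => ENNReal.ofReal (ρ p.1 p.2))
            ((μ.restrict A).prod (μ.restrict A)) = 0 ] :=
  statement2_general μ ρ hρ hmeas
end

section
/- Let (Y, μ) be a probability space, let p be a measurable semimetric on Y, and let ε>0. If ∫∫_{Y×Y} p dμdμ < ε²/2, then there exist disjoint measurable sets Y₀, Y₁ with Y₀ ∪ Y₁ = Y such that μ(Y₀) ≤ ε and diam_p(Y₁) ≤ ε (i.e., p(x,y) ≤ ε for all x,y ∈ Y₁). -/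
open MeasureTheory Filter Function Set
open scoped ENNReal

/-!
Let `F x = ∫ p(x, ·) dμ`, so that `∫ F dμ < ε²/2`. By Markov's inequality the set
`Y₀ = {F ≥ ε/2}` has measure at most `ε`, and integrating the triangle inequality
`p(x, y) ≤ p(x, z) + p(z, y)` over `z` gives `p(x, y) ≤ F x + F y < ε` on its complement.
-/

noncomputable def meanDist {X : Type*} [MeasurableSpace X] (μ : Measure X) (ρ : X → X → ℝ)
    (x : X) : ℝ≥0∞ :=
  ∫⁻ y, ENNReal.ofReal (ρ x y) ∂μ

section MeanDist

variable {X : Type*} [MeasurableSpace X] {ρ : X → X → ℝ}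

theorem measurable_meanDist (ν : Measure X) [SFinite ν] (hρ : Measurable (uncurry ρ)) :
    Measurable (meanDist ν ρ) :=
  hρ.ennreal_ofReal.lintegral_prod_right

theorem lintegral_meanDist (μ ν : Measure X) [SFinite ν] (hρ : Measurable (uncurry ρ)) :
    ∫⁻ x, meanDist ν ρ x ∂μ = ∫⁻ q, ENNReal.ofReal (ρ q.1 q.2) ∂(μ.prod ν) :=
  (lintegral_prod _ hρ.ennreal_ofReal.aemeasurable).symm

theorem ofReal_le_meanDist_add (μ : Measure X) [IsProbabilityMeasure μ]
    (hρ : Measurable (uncurry ρ)) (hsymm : ∀ x y, ρ x y = ρ y x)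
    (htri : ∀ x y z, ρ x z ≤ ρ x y + ρ y z) (x y : X) :
    ENNReal.ofReal (ρ x y) ≤ meanDist μ ρ x + meanDist μ ρ y := by
  have hpoint : ∀ z, ENNReal.ofReal (ρ x y) ≤ ENNReal.ofReal (ρ x z) + ENNReal.ofReal (ρ y z) :=
    fun z => (ENNReal.ofReal_le_ofReal (hsymm z y ▸ htri x z y)).trans ENNReal.ofReal_add_le
  calc ENNReal.ofReal (ρ x y) = ∫⁻ _, ENNReal.ofReal (ρ x y) ∂μ := by simp
    _ ≤ ∫⁻ z, (ENNReal.ofReal (ρ x z) + ENNReal.ofReal (ρ y z)) ∂μ := lintegral_mono hpoint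
    _ = meanDist μ ρ x + meanDist μ ρ y :=
      lintegral_add_left (hρ.comp measurable_prodMk_left).ennreal_ofReal _

theorem meas_meanDist_ge_le (μ : Measure X) [SFinite μ] (hρ : Measurable (uncurry ρ))
    {c : ℝ≥0∞} (hc : c ≠ 0) (hc' : c ≠ ∞) :
    μ {x | c ≤ meanDist μ ρ x} ≤ (∫⁻ q, ENNReal.ofReal (ρ q.1 q.2) ∂(μ.prod μ)) / c :=
  lintegral_meanDist μ μ hρ ▸
    meas_ge_le_lintegral_div (measurable_meanDist μ hρ).aemeasurable hc hc'

end MeanDist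

/-- if the double integral of a measurable semimetric `p` on a probability
space `(Y, μ)` is less than `ε²/2`, then `Y` splits into disjoint measurable sets `Y₀, Y₁`
with `μ(Y₀) ≤ ε` and `diam_p(Y₁) ≤ ε`. -/
theorem statement3 {Y : Type*} [MeasurableSpace Y] (μ : Measure Y) [IsProbabilityMeasure μ]
    (p : Y → Y → ℝ) (hp : IsSemimetric p) (hpmeas : Measurable (Function.uncurry p))
    (ε : ℝ) (hε : 0 < ε)
    (hint : ∫⁻ q, ENNReal.ofReal (p q.1 q.2) ∂(μ.prod μ) < ENNReal.ofReal (ε ^ 2 / 2)) :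
    ∃ Y₀ Y₁ : Set Y, MeasurableSet Y₀ ∧ MeasurableSet Y₁ ∧ Disjoint Y₀ Y₁ ∧
      Y₀ ∪ Y₁ = Set.univ ∧ μ Y₀ ≤ ENNReal.ofReal ε ∧ ∀ x ∈ Y₁, ∀ y ∈ Y₁, p x y ≤ ε := by
  obtain ⟨-, -, hsymm, htri⟩ := hp
  have hhalf : 0 < ε / 2 := half_pos hε
  set Y₀ := {x | ENNReal.ofReal (ε / 2) ≤ meanDist μ p x}
  have hY₀ : MeasurableSet Y₀ := measurableSet_le measurable_const (measurable_meanDist μ hpmeas)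
  have hμY₀ : μ Y₀ ≤ ENNReal.ofReal ε :=
    calc μ Y₀ ≤ (∫⁻ q, ENNReal.ofReal (p q.1 q.2) ∂(μ.prod μ)) / ENNReal.ofReal (ε / 2) :=
          meas_meanDist_ge_le μ hpmeas (ENNReal.ofReal_pos.2 hhalf).ne' ENNReal.ofReal_ne_top
      _ ≤ ENNReal.ofReal (ε ^ 2 / 2) / ENNReal.ofReal (ε / 2) := by gcongr
      _ = ENNReal.ofReal ε := by
          rw [← ENNReal.ofReal_div_of_pos hhalf]
          congr 1
          field_simp
  refine ⟨Y₀, Y₀ᶜ, hY₀, hY₀.compl, disjoint_compl_right, union_compl_self _, hμY₀, ?_⟩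
  intro x hx y hy
  have hxy : ENNReal.ofReal (p x y) < ENNReal.ofReal ε :=
    calc ENNReal.ofReal (p x y) ≤ meanDist μ p x + meanDist μ p y :=
          ofReal_le_meanDist_add μ hpmeas hsymm htri x y
      _ < ENNReal.ofReal (ε / 2) + ENNReal.ofReal (ε / 2) :=
          ENNReal.add_lt_add (not_le.1 hx) (not_le.1 hy)
      _ = ENNReal.ofReal ε := by rw [← ENNReal.ofReal_add hhalf.le hhalf.le, add_halves]
  exact ((ENNReal.ofReal_lt_ofReal_iff hε).1 hxy).le
end

section
/- Let (X, μ) be a standard Borel probability space. The space 𝕄 = {f ∈ L¹(X×X, μ×μ) : ‖f‖_m < ∞}, equipped with the m-norm, is complete: every sequence in 𝕄 that is Cauchy with respect to the m-norm converges in the m-norm to an element of 𝕄. -/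
open MeasureTheory Filter Function Set
open scoped ENNReal

/-!
Pass to a subsequence with `mdist (f nₖ) (f nₖ₊₁) < 2⁻ᵏ` and pick semimetrics `ρₖ` dominating
`|f nₖ - f nₖ₊₁|` with `∫ ρₖ < 2⁻ᵏ`. The tails `σₖ = ∑_{j ≥ k} ρⱼ` are `ℝ≥0∞`-valued semimetrics
with `∫ σₖ ≤ 2¹⁻ᵏ`; being finite a.e., each agrees a.e. with a measurable real semimetric `Dₖ`.
Off a null set `f nₖ` is Cauchy with `|f nₖ - G| ≤ Dₖ` at its pointwise limit `G`, whence
`‖G‖_m ≤ ‖f n₀‖_m + ∫ D₀ < ∞` and `‖f m - G‖_m ≤ ‖f m - f nₖ‖_m + ∫ Dₖ → 0`.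
-/

def IsESemimetric {X : Type*} (σ : X → X → ℝ≥0∞) : Prop :=
  (∀ x, σ x x = 0) ∧ (∀ x y, σ x y = σ y x) ∧ ∀ x y z, σ x z ≤ σ x y + σ y z

section Semimetric

variable {X : Type*}

lemma IsSemimetric.add {ρ τ : X → X → ℝ} (hρ : IsSemimetric ρ) (hτ : IsSemimetric τ) :
    IsSemimetric fun x y => ρ x y + τ x y := by
  obtain ⟨hρ0, hρd, hρs, hρt⟩ := hρ
  obtain ⟨hτ0, hτd, hτs, hτt⟩ := hτ
  refine ⟨fun x y => add_nonneg (hρ0 x y) (hτ0 x y), fun x => by simp [hρd, hτd],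
    fun x y => by simp only [hρs x y, hτs x y], fun x y z => ?_⟩
  linarith [hρt x y z, hτt x y z]

lemma IsSemimetric.ofReal {ρ : X → X → ℝ} (hρ : IsSemimetric ρ) :
    IsESemimetric fun x y => ENNReal.ofReal (ρ x y) := by
  obtain ⟨hρ0, hρd, hρs, hρt⟩ := hρ
  refine ⟨fun x => by simp [hρd], fun x y => by simp only [hρs x y], fun x y z => ?_⟩
  rw [← ENNReal.ofReal_add (hρ0 x y) (hρ0 y z)]
  exact ENNReal.ofReal_le_ofReal (hρt x y z)

lemma IsESemimetric.tsum {σ : ℕ → X → X → ℝ≥0∞} (hσ : ∀ j, IsESemimetric (σ j)) :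
    IsESemimetric fun x y => ∑' j, σ j x y := by
  refine ⟨fun x => by simp [(hσ _).1], fun x y => by simp_rw [(hσ _).2.1 x y],
    fun x y z => ?_⟩
  rw [← ENNReal.tsum_add]
  exact ENNReal.tsum_le_tsum fun j => (hσ j).2.2 x y z

lemma IsESemimetric.comp {σ : X → X → ℝ≥0∞} (hσ : IsESemimetric σ) (r : X → X) :
    IsESemimetric fun x y => σ (r x) (r y) :=
  ⟨fun _ => hσ.1 _, fun _ _ => hσ.2.1 _ _, fun _ _ _ => hσ.2.2 _ _ _⟩

lemma IsESemimetric.toReal {σ : X → X → ℝ≥0∞} (hσ : IsESemimetric σ)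
    (hfin : ∀ x y, σ x y ≠ ∞) : IsSemimetric fun x y => (σ x y).toReal := by
  refine ⟨fun x y => ENNReal.toReal_nonneg, fun x => by simp [hσ.1],
    fun x y => by simp only [hσ.2.1 x y], fun x y z => ?_⟩
  rw [← ENNReal.toReal_add (hfin x y) (hfin y z)]
  exact ENNReal.toReal_mono (ENNReal.add_ne_top.mpr ⟨hfin x y, hfin y z⟩) (hσ.2.2 x y z)

end Semimetric

section MNorm

variable {X : Type*} [MeasurableSpace X] {μ : Measure X}

lemma mnorm_le_lintegral {f ρ : X → X → ℝ} (hρ : IsSemimetric ρ)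
    (hmeas : Measurable (uncurry ρ)) (hdom : ∀ᵐ p ∂μ.prod μ, |f p.1 p.2| ≤ ρ p.1 p.2) :
    mnorm μ f ≤ ∫⁻ p, ENNReal.ofReal (ρ p.1 p.2) ∂μ.prod μ :=
  sInf_le ⟨ρ, hρ, hmeas, hdom, rfl⟩

lemma exists_semimetric_of_mnorm_lt {f : X → X → ℝ} {c : ℝ≥0∞} (h : mnorm μ f < c) :
    ∃ ρ : X → X → ℝ, IsSemimetric ρ ∧ Measurable (uncurry ρ) ∧
      (∀ᵐ p ∂μ.prod μ, |f p.1 p.2| ≤ ρ p.1 p.2) ∧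
      ∫⁻ p, ENNReal.ofReal (ρ p.1 p.2) ∂μ.prod μ < c := by
  obtain ⟨_, ⟨ρ, hρ, hmeas, hdom, rfl⟩, hlt⟩ := sInf_lt_iff.mp h
  exact ⟨ρ, hρ, hmeas, hdom, hlt⟩

lemma mnorm_le_add_lintegral_of_abs_sub_le {g g₁ D : X → X → ℝ} (hD : IsSemimetric D)
    (hmeas : Measurable (uncurry D))
    (hle : ∀ᵐ p ∂μ.prod μ, |g₁ p.1 p.2 - g p.1 p.2| ≤ D p.1 p.2) :
    mnorm μ g ≤ mnorm μ g₁ + ∫⁻ p, ENNReal.ofReal (D p.1 p.2) ∂μ.prod μ := by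
  conv_rhs => rw [mnorm, ENNReal.sInf_add]
  refine le_iInf₂ fun c ⟨ρ, hρ, hρmeas, hρdom, hc⟩ => ?_
  calc mnorm μ g ≤ ∫⁻ p, ENNReal.ofReal (ρ p.1 p.2 + D p.1 p.2) ∂μ.prod μ :=
        mnorm_le_lintegral (hρ.add hD) (hρmeas.add hmeas) <| by
          filter_upwards [hle, hρdom] with p h₁ h₂
          linarith [abs_sub_abs_le_abs_sub (g p.1 p.2) (g₁ p.1 p.2),
            abs_sub_comm (g p.1 p.2) (g₁ p.1 p.2)]
    _ = c + ∫⁻ p, ENNReal.ofReal (D p.1 p.2) ∂μ.prod μ := by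
        simp_rw [ENNReal.ofReal_add (hρ.1 _ _) (hD.1 _ _)]
        rw [lintegral_add_right _
          (show Measurable fun p : X × X => ENNReal.ofReal (D p.1 p.2) from
            hmeas.ennreal_ofReal), hc]

end MNorm

section AeFinite

variable {X : Type*} [MeasurableSpace X] {μ : Measure X} [SFinite μ] [NeZero μ]

/-- Pick `x₀` with `σ x₀ y < ∞` for a.e. `y` and retract every `y` with `σ x₀ y = ∞` onto `x₀`;
then `σ` is finite on the image of the retraction. -/
lemma IsESemimetric.exists_semimetric_ae_eq {σ : X → X → ℝ≥0∞} (hσ : IsESemimetric σ)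
    (hmeas : Measurable (uncurry σ)) (hfin : ∀ᵐ p ∂μ.prod μ, σ p.1 p.2 ≠ ∞) :
    ∃ D : X → X → ℝ, IsSemimetric D ∧ Measurable (uncurry D) ∧
      ∀ᵐ p ∂μ.prod μ, ENNReal.ofReal (D p.1 p.2) = σ p.1 p.2 := by
  classical
  obtain ⟨x₀, hx₀⟩ := (Measure.ae_ae_of_ae_prod hfin).exists
  set B : Set X := {y | σ x₀ y ≠ ∞}
  have hB : MeasurableSet B :=
    (hmeas.comp measurable_prodMk_left (measurableSet_singleton ∞)).compl
  set r : X → X := fun x => if x ∈ B then x else x₀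
  have hr : Measurable r := Measurable.ite hB measurable_id measurable_const
  have hr_ae : ∀ᵐ x ∂μ, r x = x := hx₀.mono fun x hx => if_pos hx
  have hx₀r : ∀ x, σ x₀ (r x) ≠ ∞ := fun x => by
    by_cases hx : x ∈ B
    · rw [show r x = x from if_pos hx]; exact hx
    · simp [r, hx, hσ.1]
  have hσr : ∀ x y, σ (r x) (r y) ≠ ∞ := fun x y =>
    ne_top_of_le_ne_top (by rw [hσ.2.1 (r x)]; exact ENNReal.add_ne_top.mpr ⟨hx₀r x, hx₀r y⟩)
      (hσ.2.2 (r x) x₀ (r y))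
  refine ⟨fun x y => (σ (r x) (r y)).toReal, (hσ.comp r).toReal hσr,
    (hmeas.comp ((hr.comp measurable_fst).prodMk (hr.comp measurable_snd))).ennreal_toReal, ?_⟩
  filter_upwards [Measure.quasiMeasurePreserving_fst.ae hr_ae,
    Measure.quasiMeasurePreserving_snd.ae hr_ae] with p h1 h2
  rw [ENNReal.ofReal_toReal (hσr _ _), h1, h2]

lemma exists_semimetric_ae_eq_tsum_tail {ρ : ℕ → X → X → ℝ} (hρ : ∀ j, IsSemimetric (ρ j))
    (hmeas : ∀ j, Measurable (uncurry (ρ j)))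
    (hsum : ∑' j, ∫⁻ p, ENNReal.ofReal (ρ j p.1 p.2) ∂μ.prod μ ≠ ∞) :
    ∃ D : ℕ → X → X → ℝ, (∀ k, IsSemimetric (D k)) ∧ (∀ k, Measurable (uncurry (D k))) ∧
      ∀ᵐ p ∂μ.prod μ, ∀ k,
        ENNReal.ofReal (D k p.1 p.2) = ∑' j, ENNReal.ofReal (ρ (k + j) p.1 p.2) := by
  have htail : ∀ k, ∃ D : X → X → ℝ, IsSemimetric D ∧ Measurable (uncurry D) ∧
      ∀ᵐ p ∂μ.prod μ, ENNReal.ofReal (D p.1 p.2) = ∑' j, ENNReal.ofReal (ρ (k + j) p.1 p.2) := by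
    intro k
    have hmeas' : Measurable fun p : X × X => ∑' j, ENNReal.ofReal (ρ (k + j) p.1 p.2) :=
      .tsum fun j => (hmeas (k + j)).ennreal_ofReal
    refine (IsESemimetric.tsum fun j => (hρ (k + j)).ofReal).exists_semimetric_ae_eq hmeas'
      (ae_lt_top hmeas' (ne_top_of_le_ne_top hsum ?_)).ne_of_lt
    rw [lintegral_tsum (f := fun j (p : X × X) => ENNReal.ofReal (ρ (k + j) p.1 p.2))
      fun j => (hmeas (k + j)).ennreal_ofReal.aemeasurable]
    exact ENNReal.tsum_comp_le_tsum_of_injective (add_right_injective k) _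
  choose D hD hDmeas hDeq using htail
  exact ⟨D, hD, hDmeas, ae_all_iff.mpr hDeq⟩

lemma exists_ae_tendsto_of_mdist_succ_lt {g : ℕ → X → X → ℝ} {b : ℕ → ℝ≥0∞}
    (hb : ∑' k, b k ≠ ∞) (hg : ∀ k, mdist μ (g k) (g (k + 1)) < b k) :
    ∃ D : ℕ → X → X → ℝ, (∀ k, IsSemimetric (D k)) ∧ (∀ k, Measurable (uncurry (D k))) ∧
      (∀ k, ∫⁻ p, ENNReal.ofReal (D k p.1 p.2) ∂μ.prod μ ≤ ∑' j, b (k + j)) ∧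
      ∀ᵐ p ∂μ.prod μ,
        Tendsto (fun k => g k p.1 p.2) atTop (nhds (limUnder atTop fun k => g k p.1 p.2)) ∧
        ∀ k, |g k p.1 p.2 - limUnder atTop (fun k => g k p.1 p.2)| ≤ D k p.1 p.2 := by
  choose ρ hρ hρmeas hρdom hρint using fun k => exists_semimetric_of_mnorm_lt (hg k)
  obtain ⟨D, hD, hDmeas, hDeq⟩ := exists_semimetric_ae_eq_tsum_tail hρ hρmeas
    (ne_top_of_le_ne_top hb (ENNReal.tsum_le_tsum fun k => (hρint k).le))
  refine ⟨D, hD, hDmeas, fun k => ?_, ?_⟩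
  · calc ∫⁻ p, ENNReal.ofReal (D k p.1 p.2) ∂μ.prod μ
        = ∑' j, ∫⁻ p, ENNReal.ofReal (ρ (k + j) p.1 p.2) ∂μ.prod μ := by
          rw [lintegral_congr_ae (hDeq.mono fun p hp => hp k)]
          exact lintegral_tsum fun j => (hρmeas (k + j)).ennreal_ofReal.aemeasurable
      _ ≤ ∑' j, b (k + j) := ENNReal.tsum_le_tsum fun j => (hρint (k + j)).le
  filter_upwards [ae_all_iff.mpr hρdom, hDeq] with p hdom hp
  have hstep : ∀ j, edist (g j p.1 p.2) (g (j + 1) p.1 p.2) ≤ ENNReal.ofReal (ρ j p.1 p.2) :=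
    fun j => by rw [edist_dist, Real.dist_eq]; exact ENNReal.ofReal_le_ofReal (hdom j)
  have hlim := (cauchySeq_of_edist_le_of_tsum_ne_top _ hstep
    (by simpa only [zero_add] using (hp 0).symm.trans_ne ENNReal.ofReal_ne_top)).tendsto_limUnder
  refine ⟨hlim, fun k => ?_⟩
  have hk := edist_le_tsum_of_edist_le_of_tendsto _ hstep hlim k
  rwa [← hp k, edist_dist, Real.dist_eq, ENNReal.ofReal_le_ofReal_iff ((hD k).1 _ _)] at hk

lemma exists_limit_of_mdist_succ_lt {g : ℕ → X → X → ℝ}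
    (hint : ∀ k, Integrable (uncurry (g k)) (μ.prod μ)) {b : ℕ → ℝ≥0∞} (hb : ∑' k, b k ≠ ∞)
    (hg : ∀ k, mdist μ (g k) (g (k + 1)) < b k) :
    ∃ G : X → X → ℝ, Integrable (uncurry G) (μ.prod μ) ∧
      mnorm μ G ≤ mnorm μ (g 0) + ∑' k, b k ∧
      ∀ k h, mdist μ h G ≤ mdist μ h (g k) + ∑' j, b (k + j) := by
  obtain ⟨D, hD, hDmeas, hDint, hlim⟩ := exists_ae_tendsto_of_mdist_succ_lt hb hg
  set G : X → X → ℝ := fun x y => limUnder atTop fun k => g k x y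
  have hclose : ∀ k, ∀ᵐ p ∂μ.prod μ, |g k p.1 p.2 - G p.1 p.2| ≤ D k p.1 p.2 :=
    fun k => hlim.mono fun p hp => hp.2 k
  have hD₀int : ∫⁻ p, ENNReal.ofReal (D 0 p.1 p.2) ∂μ.prod μ ≤ ∑' k, b k := by
    simpa only [zero_add] using hDint 0
  refine ⟨G, ?_, ?_, fun k h => ?_⟩
  · have hD₀ : Integrable (uncurry (D 0)) (μ.prod μ) :=
      ⟨(hDmeas 0).aestronglyMeasurable, (hasFiniteIntegral_iff_ofReal
        (ae_of_all _ fun p : X × X => (hD 0).1 p.1 p.2)).2 (hD₀int.trans_lt hb.lt_top)⟩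
    refine ((hint 0).abs.add hD₀).mono'
      (aestronglyMeasurable_of_tendsto_ae atTop (fun k => (hint k).1)
        (hlim.mono fun p hp => hp.1))
      ((hclose 0).mono fun p hp => ?_)
    change |G p.1 p.2| ≤ |g 0 p.1 p.2| + D 0 p.1 p.2
    linarith [abs_sub_abs_le_abs_sub (G p.1 p.2) (g 0 p.1 p.2),
      abs_sub_comm (G p.1 p.2) (g 0 p.1 p.2)]
  · exact (mnorm_le_add_lintegral_of_abs_sub_le (hD 0) (hDmeas 0) (hclose 0)).trans
      (add_le_add_right hD₀int _)
  · refine (mnorm_le_add_lintegral_of_abs_sub_le (hD k) (hDmeas k) ?_).trans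
      (add_le_add_right (hDint k) _)
    filter_upwards [hclose k] with p hp
    rwa [sub_sub_sub_cancel_left, abs_sub_comm]

end AeFinite

lemma exists_strictMono_lt_of_cauchy {α : Type*} [Zero α] [LT α] {d : ℕ → ℕ → α}
    (hd : ∀ ε : α, 0 < ε → ∃ N : ℕ, ∀ m ≥ N, ∀ n ≥ N, d m n < ε) {ε : ℕ → α}
    (hε : ∀ k, 0 < ε k) :
    ∃ n : ℕ → ℕ, StrictMono n ∧ ∀ k, ∀ m ≥ n k, d (n k) m < ε k ∧ d m (n k) < ε k := by
  refine extraction_forall_of_eventually'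
    (P := fun k N => ∀ m ≥ N, d N m < ε k ∧ d m N < ε k) fun k => ?_
  obtain ⟨N, hN⟩ := hd (ε k) (hε k)
  exact ⟨N, fun N' hN' m hm => ⟨hN N' hN' m (hN'.trans hm), hN m (hN'.trans hm) N' hN'⟩⟩

theorem statement4_general {X : Type*} [MeasurableSpace X]
    (μ : Measure X) [IsProbabilityMeasure μ] (f : ℕ → X → X → ℝ)
    (hint : ∀ n, Integrable (Function.uncurry (f n)) (μ.prod μ))
    (hfin : ∀ n, mnorm μ (f n) ≠ ∞)
    (hcauchy : ∀ ε : ℝ≥0∞, 0 < ε → ∃ N : ℕ, ∀ m ≥ N, ∀ n ≥ N, mdist μ (f m) (f n) < ε) :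
    ∃ g : X → X → ℝ, Integrable (Function.uncurry g) (μ.prod μ) ∧ mnorm μ g ≠ ∞ ∧
      Tendsto (fun n => mdist μ (f n) g) atTop (nhds 0) := by
  obtain ⟨n, hmono, hn⟩ := exists_strictMono_lt_of_cauchy hcauchy
    (ε := fun k => 2⁻¹ ^ k) fun k => ENNReal.pow_pos (ENNReal.inv_pos.2 ENNReal.ofNat_ne_top) k
  have hgeom : ∑' k, (2⁻¹ : ℝ≥0∞) ^ k ≠ ∞ := by
    rw [ENNReal.tsum_geometric, ENNReal.one_sub_inv_two, inv_inv]
    exact ENNReal.ofNat_ne_top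
  obtain ⟨G, hGint, hGnorm, hGdist⟩ := exists_limit_of_mdist_succ_lt (fun k => hint (n k))
    hgeom fun k => (hn k _ (hmono.monotone k.le_succ)).1
  refine ⟨G, hGint, ne_top_of_le_ne_top (ENNReal.add_ne_top.2 ⟨hfin _, hgeom⟩) hGnorm,
    ENNReal.tendsto_nhds_zero.2 fun ε hε => ?_⟩
  have hbound : Tendsto (fun k => 2⁻¹ ^ k + ∑' j, (2⁻¹ : ℝ≥0∞) ^ (k + j)) atTop (nhds 0) := by
    have hpow : Tendsto (fun k => (2⁻¹ : ℝ≥0∞) ^ k) atTop (nhds 0) :=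
      ENNReal.tendsto_pow_atTop_nhds_zero_of_lt_one (ENNReal.inv_lt_one.2 ENNReal.one_lt_two)
    have htail : Tendsto (fun k => ∑' j, (2⁻¹ : ℝ≥0∞) ^ (k + j)) atTop (nhds 0) :=
      (ENNReal.tendsto_sum_nat_add _ hgeom).congr fun k => tsum_congr fun j => by rw [add_comm]
    simpa only [add_zero] using hpow.add htail
  obtain ⟨k, hk⟩ := (hbound.eventually (gt_mem_nhds hε)).exists
  filter_upwards [eventually_ge_atTop (n k)] with m hm
  exact (hGdist k (f m)).trans ((add_le_add_left (hn k m hm).2.le _).trans hk.le)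

/-- the space `𝕄 = {f ∈ L¹(X×X, μ×μ) : ‖f‖_m < ∞}` is complete in the
m-norm: every Cauchy sequence in `𝕄` converges in the m-norm to an element of `𝕄`. -/
theorem statement4 {X : Type*} [MeasurableSpace X] [StandardBorelSpace X]
    (μ : Measure X) [IsProbabilityMeasure μ] (f : ℕ → X → X → ℝ)
    (hint : ∀ n, Integrable (Function.uncurry (f n)) (μ.prod μ))
    (hfin : ∀ n, mnorm μ (f n) ≠ ∞)
    (hcauchy : ∀ ε : ℝ≥0∞, 0 < ε → ∃ N : ℕ, ∀ m ≥ N, ∀ n ≥ N, mdist μ (f m) (f n) < ε) :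
    ∃ g : X → X → ℝ, Integrable (Function.uncurry g) (μ.prod μ) ∧ mnorm μ g ≠ ∞ ∧
      Tendsto (fun n => mdist μ (f n) g) atTop (nhds 0) :=
  statement4_general μ f hint hfin hcauchy
end

section
/- Let (X, μ) be a standard Borel probability space and let M be a set of admissible summable semimetrics on X such that for every ε>0 the set {H_ε(ρ, μ) : ρ ∈ M} is bounded. Then every measurable semimetric that is the limit in L¹(X×X, μ×μ) of a sequence of elements of M is an admissible semimetric. -/
open MeasureTheory Filter Function Set
open scoped ENNReal

/-! If `ρ` is `L¹`-close to `σ`, then for all `x` outside a set of small measure the section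
`{y | ε / 4 ≤ |ρ x y - σ x y|}` is small. Two such points lying in the same non-negligible piece
of a `ρ`-cover at scale `ε / 4` therefore share a point `z` at which `ρ` and `σ` nearly agree,
and the triangle inequality gives `σ x y < ε`. The uniform entropy bound caps the number of
pieces, so the required closeness does not depend on `ρ ∈ M` and `σ` has a finite `ε`-cover
for every `ε > 0`. Borel–Cantelli applied to covers at scales `2⁻ᵐ` then yields a countable
dense subset of the complement of a null set. -/

section Covers

variable {X : Type*}

theorem separableOn_of_covers (σ : X → X → ℝ) {r : ℕ → ℝ} (hr : Tendsto r atTop (nhds 0))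
    {k : ℕ → ℕ} (A : ∀ m, Fin (k m + 1) → Set X) (hcover : ∀ m, ⋃ i, A m i = univ)
    (hdiam : ∀ m i, i ≠ 0 → ∀ x ∈ A m i, ∀ y ∈ A m i, σ x y < r m)
    {S : Set X} (hS : ∀ x ∈ S, ∀ᶠ m in atTop, x ∉ A m 0) : SeparableOn σ S := by
  refine ⟨⋃ (m) (i) (h : (S ∩ A m i).Nonempty), {h.some}, ?_, ?_, ?_⟩
  · simp only [iUnion_subset_iff, singleton_subset_iff]
    exact fun m i h => h.some_mem.1
  · exact countable_iUnion fun m => countable_iUnion fun i =>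
      countable_iUnion fun _ => countable_singleton _
  · intro x hx ε hε
    obtain ⟨m, hmA, hmr⟩ := ((hS x hx).and (hr.eventually (gt_mem_nhds hε))).exists
    obtain ⟨i, hxi⟩ := mem_iUnion.1 (hcover m ▸ mem_univ x)
    have hne : (S ∩ A m i).Nonempty := ⟨x, hx, hxi⟩
    have hi : i ≠ 0 := by rintro rfl; exact hmA hxi
    exact ⟨hne.some, mem_iUnion₂.2 ⟨m, i, mem_iUnion.2 ⟨hne, rfl⟩⟩,
      (hdiam m i hi x hxi _ hne.some_mem.2).trans hmr⟩

variable [MeasurableSpace X] {μ : Measure X}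

theorem exists_separableOn_of_forall_isEpsCover {σ : X → X → ℝ}
    (h : ∀ ε : ℝ, 0 < ε → ∃ k, IsEpsCover μ σ ε k) :
    ∃ S : Set X, MeasurableSet S ∧ μ Sᶜ = 0 ∧ SeparableOn σ S := by
  choose k A hAm hcover hA0 hdiam using fun m : ℕ => h (2⁻¹ ^ m) (by positivity)
  have hsmall : ∀ m, μ (A m 0) ≤ 2⁻¹ ^ m := fun m => by
    have h2 : ENNReal.ofReal (2⁻¹ ^ m) = 2⁻¹ ^ m := by
      rw [ENNReal.ofReal_pow (by norm_num), ENNReal.ofReal_inv_of_pos two_pos, ENNReal.ofReal_ofNat]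
    exact h2 ▸ (hA0 m).le
  have hnull : μ (limsup (fun m => A m 0) atTop) = 0 :=
    measure_limsup_atTop_eq_zero <| ne_top_of_le_ne_top (by simp) <|
      (ENNReal.tsum_le_tsum hsmall).trans_eq ENNReal.tsum_geometric_two
  refine ⟨(limsup (fun m => A m 0) atTop)ᶜ,
    (MeasurableSet.measurableSet_limsup fun m => hAm m 0).compl, by rwa [compl_compl], ?_⟩
  refine separableOn_of_covers σ (tendsto_pow_atTop_nhds_zero_of_lt_one (by norm_num)
    (by norm_num)) A hcover hdiam fun x hx => ?_
  simpa [mem_limsup_iff_frequently_mem] using hx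

end Covers

section Approximation

variable {X : Type*} [MeasurableSpace X] {μ : Measure X}

theorem isEpsCover_of_exceptional {σ : X → X → ℝ} {ε : ℝ} {k : ℕ} {A : Fin (k + 1) → Set X}
    (hAm : ∀ i, MeasurableSet (A i)) (hcover : ⋃ i, A i = univ) {B : Set X}
    (hB : MeasurableSet B) (hμ : μ (A 0 ∪ B) < ENNReal.ofReal ε)
    (hdiam : ∀ i, i ≠ 0 → ∀ x ∈ A i \ B, ∀ y ∈ A i \ B, σ x y < ε) :
    IsEpsCover μ σ ε k := by
  refine ⟨fun i => if i = 0 then A 0 ∪ B else A i \ B, fun i => ?_, ?_, by simpa using hμ,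
    fun i hi => by simpa [hi] using hdiam i hi⟩
  · dsimp only
    split_ifs
    exacts [(hAm 0).union hB, (hAm i).diff hB]
  · refine eq_univ_of_forall fun x => ?_
    obtain ⟨i, hxi⟩ := mem_iUnion.1 (hcover ▸ mem_univ x)
    by_cases hx : i = 0 ∨ x ∈ B
    · exact mem_iUnion.2 ⟨0, by rcases hx with rfl | hx <;> simp [*]⟩
    · obtain ⟨hi, hxB⟩ := not_or.1 hx
      exact mem_iUnion.2 ⟨i, by simp [hi, hxi, hxB]⟩

theorem measure_iUnion_measure_le_le {ι : Type*} [Fintype ι] (A : ι → Set X) (c : ℝ≥0∞) :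
    μ (⋃ (i) (_ : μ (A i) ≤ c), A i) ≤ Fintype.card ι * c := by
  refine (measure_iUnion_fintype_le μ _).trans ?_
  rw [← nsmul_eq_mul]
  refine Finset.sum_le_card_nsmul _ _ _ fun i _ => ?_
  by_cases hi : μ (A i) ≤ c <;> simp [hi]

theorem nonempty_diff_of_measure_lt {A s : Set X} (h : μ s < μ A) : (A \ s).Nonempty := by
  by_contra hempty
  rw [not_nonempty_iff_eq_empty, sdiff_eq_empty] at hempty
  exact h.not_ge (measure_mono hempty)

theorem mul_measure_setOf_le_measure_prodMk_le_prod {Y : Type*} [MeasurableSpace Y]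
    (ν : Measure Y) [SFinite ν] {E : Set (X × Y)} (hE : MeasurableSet E) (c : ℝ≥0∞) :
    c * μ {x | c ≤ ν (Prod.mk x ⁻¹' E)} ≤ μ.prod ν E := by
  rw [Measure.prod_apply hE]
  exact mul_meas_ge_le_lintegral₀ (measurable_measure_prodMk_left hE).aemeasurable c

theorem mul_measure_setOf_le_abs_sub_le_L1dist {ρ σ : X → X → ℝ}
    (hρ : Measurable (uncurry ρ)) (hσ : Measurable (uncurry σ)) (c : ℝ) :
    ENNReal.ofReal c * μ.prod μ {p | c ≤ |ρ p.1 p.2 - σ p.1 p.2|} ≤ L1dist μ ρ σ :=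
  calc ENNReal.ofReal c * μ.prod μ {p | c ≤ |ρ p.1 p.2 - σ p.1 p.2|}
      ≤ ENNReal.ofReal c * μ.prod μ
          {p | ENNReal.ofReal c ≤ ENNReal.ofReal |ρ p.1 p.2 - σ p.1 p.2|} := by
        gcongr
        exact ENNReal.ofReal_le_ofReal
    _ ≤ L1dist μ ρ σ :=
        mul_meas_ge_le_lintegral₀ ((hρ.sub hσ).abs.ennreal_ofReal).aemeasurable _

theorem measure_setOf_large_section_lt_of_L1dist_lt [SFinite μ] {ρ σ : X → X → ℝ}
    (hρ : Measurable (uncurry ρ)) (hσ : Measurable (uncurry σ)) {b c : ℝ} (hb : 0 < b)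
    (hc : 0 < c) (hL1 : L1dist μ ρ σ < ENNReal.ofReal (c * (b * c))) :
    μ {x | ENNReal.ofReal b ≤ μ (Prod.mk x ⁻¹' {p | c ≤ |ρ p.1 p.2 - σ p.1 p.2|})} <
      ENNReal.ofReal c := by
  have hE : MeasurableSet {p : X × X | c ≤ |ρ p.1 p.2 - σ p.1 p.2|} :=
    measurableSet_le measurable_const (hρ.sub hσ).abs
  refine (ENNReal.mul_lt_mul_iff_right (by simpa using hb) ENNReal.ofReal_ne_top).1 <|
    (ENNReal.mul_lt_mul_iff_right (by simpa using hc) ENNReal.ofReal_ne_top).1 ?_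
  calc _ ≤ ENNReal.ofReal c * μ.prod μ {p | c ≤ |ρ p.1 p.2 - σ p.1 p.2|} := by
        gcongr; exact mul_measure_setOf_le_measure_prodMk_le_prod μ hE _
    _ ≤ L1dist μ ρ σ := mul_measure_setOf_le_abs_sub_le_L1dist hρ hσ _
    _ < _ := hL1
    _ = _ := by rw [ENNReal.ofReal_mul hc.le, ENNReal.ofReal_mul hb.le]

theorem IsEpsCover.exists_of_L1dist_lt [SFinite μ] {ρ σ : X → X → ℝ} (hσ : IsSemimetric σ)
    (hρm : Measurable (uncurry ρ)) (hσm : Measurable (uncurry σ)) {ε : ℝ} (hε : 0 < ε)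
    {k N : ℕ} (hkN : k < N) (hcov : IsEpsCover μ ρ (ε / 4) k)
    (hL1 : L1dist μ ρ σ < ENNReal.ofReal (ε ^ 3 / (128 * N))) :
    ∃ k', IsEpsCover μ σ ε k' := by
  obtain ⟨A, hAm, hcover, hA0, hAdiam⟩ := hcov
  have hN : (0 : ℝ) < N := by exact_mod_cast hkN.bot_lt
  set β := ε / (8 * N)
  have hβ : 0 < β := by positivity
  set E := {p : X × X | ε / 4 ≤ |ρ p.1 p.2 - σ p.1 p.2|}
  set Bad := {x | ENNReal.ofReal β ≤ μ (Prod.mk x ⁻¹' E)}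
  set Small := ⋃ (i) (_ : μ (A i) ≤ ENNReal.ofReal (2 * β)), A i
  have hBad : μ Bad < ENNReal.ofReal (ε / 4) :=
    measure_setOf_large_section_lt_of_L1dist_lt hρm hσm hβ (by positivity) <| hL1.trans_eq <| by
      congr 1; simp only [β]; field_simp; ring
  have hSmall : μ Small ≤ ENNReal.ofReal (ε / 4) := calc
    _ ≤ Fintype.card (Fin (k + 1)) * ENNReal.ofReal (2 * β) := measure_iUnion_measure_le_le A _
    _ ≤ N * ENNReal.ofReal (2 * β) := by rw [Fintype.card_fin]; gcongr; exact_mod_cast hkN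
    _ = _ := by
      rw [← ENNReal.ofReal_natCast, ← ENNReal.ofReal_mul (by positivity)]
      congr 1; simp only [β]; field_simp; ring
  refine ⟨k, isEpsCover_of_exceptional hAm hcover (B := Bad ∪ Small) ?_ ?_ ?_⟩
  · have hEm : MeasurableSet E := measurableSet_le measurable_const (hρm.sub hσm).abs
    exact (measurableSet_le measurable_const (measurable_measure_prodMk_left hEm)).union
      (MeasurableSet.iUnion fun i => MeasurableSet.iUnion fun _ => hAm i)
  · have hε4 : 0 ≤ ε / 4 := by positivity
    calc μ (A 0 ∪ (Bad ∪ Small)) ≤ μ (A 0) + (μ Bad + μ Small) :=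
          (measure_union_le _ _).trans (by gcongr; exact measure_union_le _ _)
      _ ≤ ENNReal.ofReal (ε / 4) + (ENNReal.ofReal (ε / 4) + ENNReal.ofReal (ε / 4)) :=
          add_le_add hA0.le (add_le_add hBad.le hSmall)
      _ = ENNReal.ofReal (3 * ε / 4) := by
          rw [← ENNReal.ofReal_add hε4 hε4, ← ENNReal.ofReal_add hε4 (by positivity)]
          ring_nf
      _ < ENNReal.ofReal ε := (ENNReal.ofReal_lt_ofReal_iff hε).2 (by linarith)
  · rintro i hi x ⟨hxA, hx⟩ y ⟨hyA, hy⟩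
    simp only [mem_union, not_or] at hx hy
    have hAi : ENNReal.ofReal (2 * β) < μ (A i) := by
      by_contra! h
      exact hx.2 (mem_iUnion₂.2 ⟨i, h, hxA⟩)
    -- `A i` is too large to be covered by the two small sections, so it has a point `z`
    -- where both `ρ x z` and `ρ y z` approximate `σ` to within `ε / 4`.
    obtain ⟨z, hzA, hz⟩ := nonempty_diff_of_measure_lt <| calc
      μ (Prod.mk x ⁻¹' E ∪ Prod.mk y ⁻¹' E)
          ≤ μ (Prod.mk x ⁻¹' E) + μ (Prod.mk y ⁻¹' E) := measure_union_le _ _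
      _ < ENNReal.ofReal β + ENNReal.ofReal β := ENNReal.add_lt_add (not_le.1 hx.1) (not_le.1 hy.1)
      _ = ENNReal.ofReal (2 * β) := by rw [← ENNReal.ofReal_add hβ.le hβ.le, two_mul]
      _ < μ (A i) := hAi
    simp only [mem_union, mem_preimage, not_or, E, mem_ofPred_eq, not_le, abs_lt] at hz
    have hxz := hAdiam i hi x hxA z hzA
    have hyz := hAdiam i hi y hyA z hzA
    linarith [hσ.2.2.2 x z y, hσ.2.2.1 z y]

end Approximation

section Entropy

variable {X : Type*} [MeasurableSpace X] {μ : Measure X}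

theorem exists_isEpsCover_lt_of_epsEntropy_lt {ρ : X → X → ℝ} {ε : ℝ} {N : ℕ}
    (h : epsEntropy μ ρ ε < ENNReal.ofReal (Real.logb 2 N)) : ∃ k < N, IsEpsCover μ ρ ε k := by
  obtain ⟨_, ⟨k, hk, rfl⟩, hlt⟩ := sInf_lt_iff.1 h
  obtain ⟨hlog, hNlog⟩ := ENNReal.ofReal_lt_ofReal_iff'.1 hlt
  have hN : 0 < N := Nat.pos_of_ne_zero fun hN => by simp [hN] at hNlog
  refine ⟨k, ?_, hk⟩
  rcases k.eq_zero_or_pos with rfl | hk0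
  · exact hN
  · exact_mod_cast (Real.logb_lt_logb_iff one_lt_two (by positivity) (by positivity)).1 hlog

theorem exists_nat_pos_lt_ofReal_logb_two {C : ℝ≥0∞} (hC : C ≠ ∞) :
    ∃ N : ℕ, 0 < N ∧ C < ENNReal.ofReal (Real.logb 2 N) := by
  refine ⟨2 ^ (⌈C.toReal⌉₊ + 1), by positivity, ?_⟩
  rw [ENNReal.lt_ofReal_iff_toReal_lt hC, Nat.cast_pow, Nat.cast_ofNat, Real.logb_pow,
    Real.logb_self_eq_one one_lt_two, mul_one]
  push_cast
  linarith [Nat.le_ceil C.toReal]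

end Entropy

theorem statement6_general {X : Type*} [MeasurableSpace X]
    (μ : Measure X) [IsProbabilityMeasure μ] (M : Set (X → X → ℝ))
    (hM : ∀ ρ ∈ M, IsSemimetric ρ ∧ Admissible μ ρ ∧
      Integrable (Function.uncurry ρ) (μ.prod μ))
    (hent : ∀ ε : ℝ, 0 < ε → ∃ C : ℝ≥0∞, C ≠ ∞ ∧ ∀ ρ ∈ M, epsEntropy μ ρ ε ≤ C)
    (σ : X → X → ℝ) (hσ : IsSemimetric σ) (hσmeas : Measurable (Function.uncurry σ))
    (u : ℕ → X → X → ℝ) (hu : ∀ n, u n ∈ M)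
    (hconv : Tendsto (fun n => L1dist μ (u n) σ) atTop (nhds 0)) :
    Admissible μ σ := by
  refine ⟨hσmeas, exists_separableOn_of_forall_isEpsCover fun ε hε => ?_⟩
  obtain ⟨C, hC, hMC⟩ := hent (ε / 4) (by positivity)
  obtain ⟨N, hN, hCN⟩ := exists_nat_pos_lt_ofReal_logb_two hC
  obtain ⟨n, hn⟩ := (hconv.eventually (gt_mem_nhds (ENNReal.ofReal_pos.2
    (by positivity : 0 < ε ^ 3 / (128 * N))))).exists
  obtain ⟨k, hkN, hk⟩ := exists_isEpsCover_lt_of_epsEntropy_lt ((hMC _ (hu n)).trans_lt hCN)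
  exact hk.exists_of_L1dist_lt hσ (hM _ (hu n)).2.1.1 hσmeas hε hkN hn

/-- if `M` is a set of admissible summable semimetrics whose `ε`-entropies
are uniformly bounded for every `ε > 0`, then every measurable semimetric which is an
`L¹(X×X, μ×μ)`-limit of a sequence of elements of `M` is admissible. -/
theorem statement6 {X : Type*} [MeasurableSpace X] [StandardBorelSpace X]
    (μ : Measure X) [IsProbabilityMeasure μ] (M : Set (X → X → ℝ))
    (hM : ∀ ρ ∈ M, IsSemimetric ρ ∧ Admissible μ ρ ∧
      Integrable (Function.uncurry ρ) (μ.prod μ))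
    (hent : ∀ ε : ℝ, 0 < ε → ∃ C : ℝ≥0∞, C ≠ ∞ ∧ ∀ ρ ∈ M, epsEntropy μ ρ ε ≤ C)
    (σ : X → X → ℝ) (hσ : IsSemimetric σ) (hσmeas : Measurable (Function.uncurry σ))
    (u : ℕ → X → X → ℝ) (hu : ∀ n, u n ∈ M)
    (hconv : Tendsto (fun n => L1dist μ (u n) σ) atTop (nhds 0)) :
    Admissible μ σ :=
  statement6_general μ M hM hent σ hσ hσmeas u hu hconv
end

section
/- Let (X, μ) be a standard Borel probability space. Suppose a sequence of admissible semimetrics ρ_n converges μ×μ-almost everywhere to an admissible semimetric ρ_lim. Then there exists a measurable set X' ⊆ X of full measure such that for all x, y ∈ X', limsup_n ρ_n(x,y) = ρ_lim(x,y); moreover, if x, y ∈ X' and ρ_lim(x,y) = 0, then lim_n ρ_n(x,y) = 0. -/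
open MeasureTheory Filter Function Set
open scoped ENNReal

/-! Let `S` be a full-measure set on which `ρlim` is separable. Discarding the countably many
null `ρlim`-balls with rational radius centred in a countable dense subset of `S`, every
remaining point `x` has `ρlim`-balls of positive measure. By Fubini, for almost every `x` the
convergence `ρn(x, z) → ρlim(x, z)` holds for almost every `z`. So for good `x, y` and any
`δ > 0` there is a `z` with `ρlim(x, z) < δ` at which both `ρn(x, z)` and `ρn(y, z)` converge,
and the triangle inequality gives
`|ρn(x,y) - ρlim(x,y)| ≤ |ρn(x,z) - ρlim(x,z)| + |ρn(y,z) - ρlim(y,z)| + 2 ρlim(x,z)`.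
Hence `ρn(x, y) → ρlim(x, y)` for all good `x, y`. -/

open scoped Topology

namespace MeasureTheory

theorem exists_measurableSet_measure_compl_eq_zero_of_ae {α : Type*} [MeasurableSpace α]
    {μ : Measure α} {P : α → Prop} (h : ∀ᵐ x ∂μ, P x) :
    ∃ s, MeasurableSet s ∧ μ sᶜ = 0 ∧ ∀ x ∈ s, P x := by
  obtain ⟨t, hPt, htm, ht⟩ := exists_measurable_superset_of_null (ae_iff.1 h)
  exact ⟨tᶜ, htm.compl, by rwa [compl_compl], fun x hx => by_contra fun hPx => hx (hPt hPx)⟩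

theorem Measure.exists_measurableSet_forall_ae_of_ae_prod {α β : Type*} [MeasurableSpace α]
    [MeasurableSpace β] {μ : Measure α} {ν : Measure β} [SFinite ν] {P : α × β → Prop}
    (h : ∀ᵐ p ∂μ.prod ν, P p) :
    ∃ s, MeasurableSet s ∧ μ sᶜ = 0 ∧ ∀ x ∈ s, ∀ᵐ y ∂ν, P (x, y) :=
  exists_measurableSet_measure_compl_eq_zero_of_ae (Measure.ae_ae_of_ae_prod h)

end MeasureTheory

namespace IsSemimetric

variable {X : Type*} {ρ σ : X → X → ℝ}

theorem abs_sub_le (hσ : IsSemimetric σ) (hρ : IsSemimetric ρ) (x y z : X) :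
    |σ x y - ρ x y| ≤ |σ x z - ρ x z| + |σ y z - ρ y z| + 2 * ρ x z := by
  obtain ⟨-, -, hσsymm, hσtri⟩ := hσ
  obtain ⟨-, -, hρsymm, hρtri⟩ := hρ
  have hσ₁ : σ x y ≤ σ x z + σ y z := hσsymm z y ▸ hσtri x z y
  have hσ₂ : σ y z ≤ σ x y + σ x z := hσsymm y x ▸ hσtri y x z
  have hρ₁ : ρ x y ≤ ρ x z + ρ y z := hρsymm z y ▸ hρtri x z y
  have hρ₂ : ρ y z ≤ ρ x y + ρ x z := hρsymm y x ▸ hρtri y x z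
  rw [abs_le]
  constructor <;> linarith [le_abs_self (σ x z - ρ x z), neg_abs_le (σ x z - ρ x z),
    le_abs_self (σ y z - ρ y z), neg_abs_le (σ y z - ρ y z)]

theorem tendsto_of_forall_exists_near {ι : Type*} {l : Filter ι} {σ : ι → X → X → ℝ}
    (hσ : ∀ i, IsSemimetric (σ i)) (hρ : IsSemimetric ρ) {x y : X}
    (h : ∀ δ > 0, ∃ z, ρ x z < δ ∧ Tendsto (fun i => σ i x z) l (𝓝 (ρ x z)) ∧
      Tendsto (fun i => σ i y z) l (𝓝 (ρ y z))) :
    Tendsto (fun i => σ i x y) l (𝓝 (ρ x y)) := by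
  rw [Metric.tendsto_nhds]
  intro ε hε
  obtain ⟨z, hz, hxz, hyz⟩ := h (ε / 4) (by positivity)
  filter_upwards [hxz.eventually (eventually_abs_sub_lt _ (by positivity : 0 < ε / 4)),
    hyz.eventually (eventually_abs_sub_lt _ (by positivity : 0 < ε / 4))] with i hx hy
  rw [Real.dist_eq]
  linarith [(hσ i).abs_sub_le hρ x y z]

end IsSemimetric

theorem SeparableOn.exists_null_forall_measure_ball_ne_zero {X : Type*} [MeasurableSpace X]
    (μ : Measure X) {ρ : X → X → ℝ} (hρ : IsSemimetric ρ) (hmeas : ∀ a, Measurable (ρ a))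
    {S : Set X} (hS : SeparableOn ρ S) :
    ∃ N, MeasurableSet N ∧ μ N = 0 ∧ ∀ a ∈ S \ N, ∀ ε > 0, μ {z | ρ a z < ε} ≠ 0 := by
  obtain ⟨-, -, hsymm, htri⟩ := hρ
  obtain ⟨D, -, hD, hdense⟩ := hS
  have hball (a : X) (r : ℝ) : MeasurableSet {z | ρ a z < r} :=
    measurableSet_lt (hmeas a) measurable_const
  refine ⟨⋃ d ∈ D, ⋃ q : ℚ, ⋃ _ : μ {z | ρ d z < q} = 0, {z | ρ d z < q},
    .biUnion hD fun d _ => .iUnion fun q => .iUnion fun _ => hball d q,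
    (measure_biUnion_null_iff hD).2 fun d _ => measure_iUnion_null fun q =>
      measure_iUnion_null_iff.2 id, ?_⟩
  rintro a ⟨haS, haN⟩ ε hε hnull
  obtain ⟨d, hdD, had⟩ := hdense a haS (ε / 2) (half_pos hε)
  obtain ⟨q, hadq, hqε⟩ := exists_rat_btwn had
  have hsub : {z | ρ d z < q} ⊆ {z | ρ a z < ε} := fun z (hz : ρ d z < q) =>
    show ρ a z < ε by linarith [htri a d z]
  refine haN (mem_biUnion hdD (mem_iUnion.2 ⟨q, mem_iUnion.2 ⟨measure_mono_null hsub hnull, ?_⟩⟩))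
  simpa [hsymm d a] using hadq

theorem statement7_general {X : Type*} [MeasurableSpace X]
    (μ : Measure X) [IsProbabilityMeasure μ] (ρn : ℕ → X → X → ℝ) (ρlim : X → X → ℝ)
    (hρn : ∀ n, IsSemimetric (ρn n))
    (hρ : IsSemimetric ρlim) (hρadm : Admissible μ ρlim)
    (hae : ∀ᵐ p ∂(μ.prod μ), Tendsto (fun n => ρn n p.1 p.2) atTop (nhds (ρlim p.1 p.2))) :
    ∃ X' : Set X, MeasurableSet X' ∧ μ X'ᶜ = 0 ∧
      (∀ x ∈ X', ∀ y ∈ X', Filter.limsup (fun n => ρn n x y) atTop = ρlim x y) ∧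
      ∀ x ∈ X', ∀ y ∈ X', ρlim x y = 0 → Tendsto (fun n => ρn n x y) atTop (nhds 0) := by
  obtain ⟨hmeas, S, hSm, hS, hsep⟩ := hρadm
  obtain ⟨N, hNm, hN, hball⟩ :=
    hsep.exists_null_forall_measure_ball_ne_zero μ hρ fun a => hmeas.comp measurable_prodMk_left
  obtain ⟨F, hFm, hF, hslice⟩ := Measure.exists_measurableSet_forall_ae_of_ae_prod hae
  have hconv : ∀ x ∈ (S \ N) ∩ F, ∀ y ∈ (S \ N) ∩ F,
      Tendsto (fun n => ρn n x y) atTop (𝓝 (ρlim x y)) := by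
    rintro x ⟨hxS, hxF⟩ y ⟨-, hyF⟩
    refine IsSemimetric.tendsto_of_forall_exists_near hρn hρ fun δ hδ => ?_
    exact Measure.exists_mem_of_measure_ne_zero_of_ae (hball x hxS δ hδ)
      (ae_restrict_of_ae ((hslice x hxF).and (hslice y hyF)))
  refine ⟨(S \ N) ∩ F, (hSm.diff hNm).inter hFm, ?_, fun x hx y hy => (hconv x hx y hy).limsup_eq,
    fun x hx y hy h0 => h0 ▸ hconv x hx y hy⟩
  rw [compl_inter, sdiff_eq, compl_inter, compl_compl]
  exact measure_union_null (measure_union_null hS hN) hF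

/-- if admissible semimetrics `ρ_n` converge `μ×μ`-a.e. to an admissible
semimetric `ρ_lim`, then there is a set `X'` of full measure such that
`limsup_n ρ_n(x,y) = ρ_lim(x,y)` for ALL `x, y ∈ X'`, and moreover `ρ_n(x,y) → 0`
whenever `x, y ∈ X'` and `ρ_lim(x,y) = 0`. -/
theorem statement7 {X : Type*} [MeasurableSpace X] [StandardBorelSpace X]
    (μ : Measure X) [IsProbabilityMeasure μ] (ρn : ℕ → X → X → ℝ) (ρlim : X → X → ℝ)
    (hρn : ∀ n, IsSemimetric (ρn n)) (hρnadm : ∀ n, Admissible μ (ρn n))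
    (hρ : IsSemimetric ρlim) (hρadm : Admissible μ ρlim)
    (hae : ∀ᵐ p ∂(μ.prod μ), Tendsto (fun n => ρn n p.1 p.2) atTop (nhds (ρlim p.1 p.2))) :
    ∃ X' : Set X, MeasurableSet X' ∧ μ X'ᶜ = 0 ∧
      (∀ x ∈ X', ∀ y ∈ X', Filter.limsup (fun n => ρn n x y) atTop = ρlim x y) ∧
      ∀ x ∈ X', ∀ y ∈ X', ρlim x y = 0 → Tendsto (fun n => ρn n x y) atTop (nhds 0) :=
  statement7_general μ ρn ρlim hρn hρ hρadm hae
end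

section
/- Let (X, μ) be a standard Borel probability space and let R > 0. Suppose a sequence of measurable semimetrics ρ_n, each bounded above by R, converges in L¹(X×X, μ×μ) to an admissible semimetric ρ bounded above by R. Then ‖ρ_n − ρ‖_m → 0, i.e., the sequence converges to ρ in the m-norm. -/
open MeasureTheory Filter Function Set
open scoped ENNReal

/-!
Separability of `ρ` on a set of full measure yields, for each `ε > 0`, finitely many cells of
`ρ`-diameter `< ε`, each of measure at least some `m > 0`, covering `X` up to measure `ε`. For `x`
and `y` in cells `A` and `B`, the triangle inequalities of `ρₙ` and `ρ` bound `|ρₙ - ρ| (x, y)` by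
`4ε` plus the values of `|ρₙ - ρ|` at `(x, z)`, `(y, w)` and `(z, w)`, for any `z ∈ A`, `w ∈ B`.
Averaging over `A × B` gives `|ρₙ - ρ| (x, y) ≤ h x + h y` with
`∫ h ≤ 2ε + 2 ‖ρₙ - ρ‖₁ / m² + R ε`, where the last term pays for points outside the cover. The
British Rail semimetric `(x, y) ↦ h x + h y` (for `x ≠ y`) then dominates `|ρₙ - ρ|`, so
`‖ρₙ - ρ‖_m ≤ (4 + 2R) ε + 4 ‖ρₙ - ρ‖₁ / m²`, and `ε` is arbitrary.
-/

open scoped Topology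

theorem IsSemimetric.abs_sub_le_four_point {X : Type*} {a b : X → X → ℝ}
    (ha : IsSemimetric a) (hb : IsSemimetric b) (x y z w : X) :
    |a x y - b x y| ≤
      |a x z - b x z| + |a y w - b y w| + |a z w - b z w| + 2 * (b x z + b y w) := by
  obtain ⟨-, -, ha_symm, ha_tri⟩ := ha
  obtain ⟨-, -, hb_symm, hb_tri⟩ := hb
  rw [abs_le]
  constructor <;>
    linarith [ha_tri x z y, ha_tri z w y, ha_tri z x w, ha_tri x y w, hb_tri x z y,
      hb_tri z w y, hb_tri z x w, hb_tri x y w, ha_symm w y, ha_symm z x, hb_symm w y,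
      hb_symm z x, le_abs_self (a x z - b x z), neg_abs_le (a x z - b x z),
      le_abs_self (a y w - b y w), neg_abs_le (a y w - b y w),
      le_abs_self (a z w - b z w), neg_abs_le (a z w - b z w)]

theorem IsSemimetric.ofReal_abs_sub_le_of_lt {X : Type*} {a b : X → X → ℝ}
    (ha : IsSemimetric a) (hb : IsSemimetric b) {ε : ℝ} (hε : 0 ≤ ε) {x y z w : X}
    (hxz : b x z < ε) (hyw : b y w < ε) :
    ENNReal.ofReal |a x y - b x y| ≤ ENNReal.ofReal (2 * ε) + ENNReal.ofReal (2 * ε) +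
      (ENNReal.ofReal |a x z - b x z| + ENNReal.ofReal |a y w - b y w| +
        ENNReal.ofReal |a z w - b z w|) := by
  have h4 := ha.abs_sub_le_four_point hb x y z w
  have h2ε : 0 ≤ 2 * ε := by linarith
  calc ENNReal.ofReal |a x y - b x y|
      ≤ ENNReal.ofReal (2 * ε + 2 * ε +
          (|a x z - b x z| + |a y w - b y w| + |a z w - b z w|)) :=
        ENNReal.ofReal_le_ofReal (by linarith)
    _ = _ := by
      rw [ENNReal.ofReal_add (add_nonneg h2ε h2ε) (by positivity), ENNReal.ofReal_add h2ε h2ε,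
        ENNReal.ofReal_add (by positivity) (abs_nonneg _),
        ENNReal.ofReal_add (abs_nonneg _) (abs_nonneg _)]

open Classical in
/-- The British Rail semimetric: every journey between distinct points goes through a hub. -/
noncomputable def britishRail {X : Type*} (h : X → ℝ) : X → X → ℝ :=
  fun x y => if x = y then 0 else h x + h y

theorem isSemimetric_britishRail {X : Type*} {h : X → ℝ} (hh : ∀ x, 0 ≤ h x) :
    IsSemimetric (britishRail h) := by
  refine ⟨fun x y => ?_, fun x => by simp [britishRail], fun x y => ?_, fun x y z => ?_⟩
  · unfold britishRail
    split_ifs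
    exacts [le_rfl, add_nonneg (hh x) (hh y)]
  · rcases eq_or_ne x y with rfl | hxy
    · rfl
    · simp [britishRail, hxy, hxy.symm, add_comm]
  · unfold britishRail
    split_ifs <;> first | linarith [hh x, hh y, hh z] | (subst_vars; simp_all)

theorem measurable_britishRail {X : Type*} [MeasurableSpace X]
    (hdiag : MeasurableSet (diagonal X)) {h : X → ℝ} (hh : Measurable h) :
    Measurable (uncurry (britishRail h)) := by
  classical
  exact Measurable.ite hdiag measurable_const
    ((hh.comp measurable_fst).add (hh.comp measurable_snd))

theorem tendsto_zero_of_forall_le_ofReal_add_mul {α : Type*} {l : Filter α} {a b : α → ℝ≥0∞}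
    (hb : Tendsto b l (𝓝 0)) (h : ∀ η : ℝ, 0 < η → ∃ K ≠ ∞, ∀ n, a n ≤ ENNReal.ofReal η + K * b n) :
    Tendsto a l (𝓝 0) := by
  rw [ENNReal.tendsto_nhds_zero]
  intro δ hδ
  obtain ⟨η, -, hη, hηδ⟩ := ENNReal.lt_iff_exists_real_btwn.1 (ENNReal.half_pos hδ.ne')
  obtain ⟨K, hK, hab⟩ := h η (ENNReal.ofReal_pos.1 hη)
  have hKb : Tendsto (fun n => K * b n) l (𝓝 0) := by
    simpa using ENNReal.Tendsto.const_mul hb (.inr hK)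
  filter_upwards [ENNReal.tendsto_nhds_zero.1 hKb _ (ENNReal.half_pos hδ.ne')] with n hn
  calc a n ≤ ENNReal.ofReal η + K * b n := hab n
    _ ≤ δ / 2 + δ / 2 := add_le_add hηδ.le hn
    _ = δ := ENNReal.add_halves δ

theorem exists_finset_measure_compl_biUnion_lt {X : Type*} [MeasurableSpace X]
    {μ : Measure X} [IsFiniteMeasure μ] {B : ℕ → Set X} (hB : ∀ i, MeasurableSet (B i))
    (hcov : μ (⋃ i, B i)ᶜ = 0) {δ : ℝ≥0∞} (hδ : 0 < δ) :
    ∃ s : Finset ℕ, (∀ i ∈ s, 0 < μ (B i)) ∧ μ (⋃ i ∈ s, B i)ᶜ < δ := by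
  have hacc (N : ℕ) : MeasurableSet (accumulate B N) := .iUnion fun i => .iUnion fun _ => hB i
  have hlim : Tendsto (fun N => μ (accumulate B N)ᶜ) atTop (𝓝 0) := by
    have := tendsto_measure_iInter_atTop (μ := μ) (s := fun N => (accumulate B N)ᶜ)
      (fun N => (hacc N).compl.nullMeasurableSet)
      (fun M N hMN => compl_subset_compl.2 (monotone_accumulate hMN)) ⟨0, measure_ne_top _ _⟩
    rwa [← compl_iUnion, iUnion_accumulate, hcov] at this
  obtain ⟨N, hN⟩ := (hlim.eventually (gt_mem_nhds hδ)).exists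
  refine ⟨(Finset.Iic N).filter fun i => 0 < μ (B i), fun i hi => (Finset.mem_filter.1 hi).2,
    lt_of_le_of_lt ?_ hN⟩
  set T := ⋃ i, ⋃ (_ : μ (B i) = 0), B i
  have hT : μ T = 0 := measure_iUnion_null fun i => measure_iUnion_null fun h => h
  have hsub :
      (⋃ i ∈ (Finset.Iic N).filter fun i => 0 < μ (B i), B i)ᶜ ⊆ (accumulate B N)ᶜ ∪ T := by
    intro x hx
    by_cases hxN : x ∈ accumulate B N
    · obtain ⟨i, hiN, hxi⟩ := mem_accumulate.1 hxN
      refine Or.inr (mem_iUnion₂.2 ⟨i, ?_, hxi⟩)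
      by_contra hpos
      exact hx (mem_iUnion₂.2
        ⟨i, Finset.mem_filter.2 ⟨Finset.mem_Iic.2 hiN, pos_iff_ne_zero.2 hpos⟩, hxi⟩)
    · exact Or.inl hxN
  calc _ ≤ μ ((accumulate B N)ᶜ ∪ T) := measure_mono hsub
    _ ≤ μ (accumulate B N)ᶜ := (measure_union_le _ _).trans_eq (by rw [hT, add_zero])

section ProbabilitySpace

variable {X : Type*} [MeasurableSpace X] {μ : Measure X} [IsProbabilityMeasure μ]

theorem mnorm_le_two_mul_lintegral (hdiag : MeasurableSet (diagonal X)) {f : X → X → ℝ}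
    {h : X → ℝ≥0∞} (hh : Measurable h) (hh_fin : ∀ x, h x ≠ ∞) (hf_diag : ∀ x, f x x = 0)
    (hfh : ∀ x y, ENNReal.ofReal |f x y| ≤ h x + h y) :
    mnorm μ f ≤ 2 * ∫⁻ x, h x ∂μ := by
  have hsum (x y : X) : ENNReal.ofReal ((h x).toReal + (h y).toReal) = h x + h y := by
    rw [← ENNReal.toReal_add (hh_fin x) (hh_fin y),
      ENNReal.ofReal_toReal (ENNReal.add_ne_top.2 ⟨hh_fin x, hh_fin y⟩)]
  set σ := britishRail fun x => (h x).toReal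
  have hdom (p : X × X) : |f p.1 p.2| ≤ σ p.1 p.2 := by
    by_cases hp : p.1 = p.2
    · simp [σ, britishRail, hp, hf_diag]
    · simp only [σ, britishRail, if_neg hp]
      rw [← ENNReal.toReal_add (hh_fin _) (hh_fin _)]
      exact (ENNReal.ofReal_le_iff_le_toReal (ENNReal.add_ne_top.2 ⟨hh_fin _, hh_fin _⟩)).1
        (hfh _ _)
  unfold mnorm
  refine (sInf_le (by exact ⟨σ, isSemimetric_britishRail fun _ => ENNReal.toReal_nonneg,
    measurable_britishRail hdiag hh.ennreal_toReal, ae_of_all _ hdom, rfl⟩)).trans ?_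
  calc ∫⁻ p, ENNReal.ofReal (σ p.1 p.2) ∂μ.prod μ
      ≤ ∫⁻ p, (h p.1 + h p.2) ∂μ.prod μ := lintegral_mono fun p => by
        by_cases hp : p.1 = p.2 <;> simp [σ, britishRail, hp, hsum]
    _ = 2 * ∫⁻ x, h x ∂μ := by
      rw [lintegral_add_left (f := fun p : X × X => h p.1) (hh.comp measurable_fst),
        measurePreserving_fst.lintegral_comp hh, measurePreserving_snd.lintegral_comp hh, two_mul]

theorem le_add_lintegral_div_of_forall_mem_prod {f : X → X → ℝ≥0∞}
    (hf : Measurable (uncurry f)) {A B : Set X} {m C : ℝ≥0∞} (hm : m ≠ 0) (hmA : m ≤ μ A)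
    (hmB : m ≤ μ B) {x y : X}
    (hxy : ∀ z ∈ A, ∀ w ∈ B, f x y ≤ C + (f x z + f y w + f z w)) :
    f x y ≤ C + (∫⁻ z, f x z ∂μ + ∫⁻ w, f y w ∂μ + ∫⁻ p, f p.1 p.2 ∂μ.prod μ) / (m * m) := by
  set I := ∫⁻ z, f x z ∂μ + ∫⁻ w, f y w ∂μ + ∫⁻ p, f p.1 p.2 ∂μ.prod μ
  set M := μ A * μ B
  have hM0 : M ≠ 0 := mul_ne_zero (hm.bot_lt.trans_le hmA).ne' (hm.bot_lt.trans_le hmB).ne'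
  have hMtop : M ≠ ∞ := ENNReal.mul_ne_top (measure_ne_top _ _) (measure_ne_top _ _)
  have hfx : Measurable (f x) := hf.comp measurable_prodMk_left
  have hfy : Measurable (f y) := hf.comp measurable_prodMk_left
  have hx₁ : Measurable fun p : X × X => f x p.1 := hfx.comp measurable_fst
  have hy₂ : Measurable fun p : X × X => f y p.2 := hfy.comp measurable_snd
  -- average the pointwise bound over `(z, w) ∈ A ×ˢ B`
  have key : f x y * M ≤ C * M + I := calc
    f x y * M = ∫⁻ _ in A ×ˢ B, f x y ∂μ.prod μ := by rw [setLIntegral_const, Measure.prod_prod]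
    _ ≤ ∫⁻ p in A ×ˢ B, (C + (f x p.1 + f y p.2 + f p.1 p.2)) ∂μ.prod μ :=
      setLIntegral_mono (measurable_const.add ((hx₁.add hy₂).add hf)) fun p hp =>
        hxy _ hp.1 _ hp.2
    _ = C * M + ∫⁻ p in A ×ˢ B, (f x p.1 + f y p.2 + f p.1 p.2) ∂μ.prod μ := by
      rw [lintegral_add_left measurable_const, setLIntegral_const, Measure.prod_prod]
    _ ≤ C * M + ∫⁻ p, (f x p.1 + f y p.2 + f p.1 p.2) ∂μ.prod μ := by
      gcongr
      exact Measure.restrict_le_self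
    _ = C * M + I := by
      rw [lintegral_add_left (f := fun p : X × X => f x p.1 + f y p.2) (hx₁.add hy₂),
        lintegral_add_left hx₁,
        measurePreserving_fst.lintegral_comp hfx, measurePreserving_snd.lintegral_comp hfy]
  calc f x y ≤ (C * M + I) / M := (ENNReal.le_div_iff_mul_le (.inl hM0) (.inl hMtop)).2 key
    _ = C + I / M := by rw [ENNReal.add_div, ENNReal.mul_div_cancel_right hM0 hMtop]
    _ ≤ C + I / (m * m) := by
      gcongr
      exact mul_le_mul' hmA hmB

theorem mdist_le_of_cover (hdiag : MeasurableSet (diagonal X)) {a b : X → X → ℝ}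
    (ha : IsSemimetric a) (hb : IsSemimetric b) (ha_meas : Measurable (uncurry a))
    (hb_meas : Measurable (uncurry b)) {R : ℝ} (hR : 0 ≤ R)
    (hab : ∀ x y, |a x y - b x y| ≤ R) {ε : ℝ} (hε : 0 ≤ ε) {ι : Type*} {s : Finset ι}
    {Y : ι → Set X} (hY_meas : ∀ i ∈ s, MeasurableSet (Y i))
    (hY_diam : ∀ i ∈ s, ∀ x ∈ Y i, ∀ y ∈ Y i, b x y < ε) {m : ℝ≥0∞} (hm : m ≠ 0)
    (hmY : ∀ i ∈ s, m ≤ μ (Y i)) (hcov : μ (⋃ i ∈ s, Y i)ᶜ ≤ ENNReal.ofReal ε) :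
    mdist μ a b ≤ ENNReal.ofReal ((4 + 2 * R) * ε) + 4 / (m * m) * L1dist μ a b := by
  set f : X → X → ℝ≥0∞ := fun x y => ENNReal.ofReal |a x y - b x y|
  have hf : Measurable (uncurry f) := (ha_meas.sub hb_meas).abs.ennreal_ofReal
  have hfR (x y : X) : f x y ≤ ENNReal.ofReal R := ENNReal.ofReal_le_ofReal (hab x y)
  set H : X → ℝ≥0∞ := fun x => ∫⁻ z, f x z ∂μ
  have hH_meas : Measurable H := hf.lintegral_prod_right'
  set D := L1dist μ a b
  have hHD : ∫⁻ x, H x ∂μ = D := (lintegral_prod _ hf.aemeasurable).symm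
  have hH_fin (x : X) : H x ≠ ∞ :=
    ne_top_of_le_ne_top (ENNReal.ofReal_ne_top (r := R))
      (by simpa using lintegral_mono (μ := μ) (hfR x))
  have hD_fin : D ≠ ∞ :=
    ne_top_of_le_ne_top (ENNReal.ofReal_ne_top (r := R))
      ((lintegral_mono fun p : X × X => hfR p.1 p.2).trans_eq (by simp))
  set U := ⋃ i ∈ s, Y i
  have hU : MeasurableSet U := s.measurableSet_biUnion hY_meas
  set h : X → ℝ≥0∞ := fun x => ENNReal.ofReal (2 * ε) + (H x + D) / (m * m) +
    Uᶜ.indicator (fun _ => ENNReal.ofReal R) x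
  have hh_meas : Measurable h :=
    (measurable_const.add ((hH_meas.add_const D).div_const _)).add
      (measurable_const.indicator hU.compl)
  have hh_fin (x : X) : h x ≠ ∞ := by
    refine ENNReal.add_ne_top.2 ⟨ENNReal.add_ne_top.2 ⟨ENNReal.ofReal_ne_top,
      (ENNReal.div_lt_top (ENNReal.add_ne_top.2 ⟨hH_fin x, hD_fin⟩) (mul_ne_zero hm hm)).ne⟩, ?_⟩
    by_cases hx : x ∈ Uᶜ <;> simp [hx]
  -- On `U × U`, average the four-point bound over the cells of `x` and `y`; off it, `f ≤ R`.
  have hdom (x y : X) : f x y ≤ h x + h y := by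
    by_cases hxy : x ∈ U ∧ y ∈ U
    · obtain ⟨i, hi, hxi⟩ := mem_iUnion₂.1 hxy.1
      obtain ⟨j, hj, hyj⟩ := mem_iUnion₂.1 hxy.2
      calc f x y ≤ ENNReal.ofReal (2 * ε) + ENNReal.ofReal (2 * ε) + (H x + H y + D) / (m * m) :=
            le_add_lintegral_div_of_forall_mem_prod hf hm (hmY i hi) (hmY j hj)
              fun z hz w hw => ha.ofReal_abs_sub_le_of_lt hb hε (hY_diam i hi x hxi z hz)
                (hY_diam j hj y hyj w hw)
        _ ≤ (ENNReal.ofReal (2 * ε) + (H x + D) / (m * m)) +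
            (ENNReal.ofReal (2 * ε) + (H y + D) / (m * m)) := by
          rw [add_add_add_comm _ ((H x + D) / (m * m)), ← ENNReal.add_div]
          gcongr _ + ?_ / _
          rw [add_right_comm]
          gcongr
          exact le_self_add
        _ ≤ h x + h y := add_le_add le_self_add le_self_add
    · rcases not_and_or.1 hxy with hx | hy
      · calc f x y ≤ Uᶜ.indicator (fun _ => ENNReal.ofReal R) x := by
              rw [indicator_of_mem hx]; exact hfR x y
          _ ≤ h x + h y := le_add_self.trans le_self_add
      · calc f x y ≤ Uᶜ.indicator (fun _ => ENNReal.ofReal R) y := by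
              rw [indicator_of_mem hy]; exact hfR x y
          _ ≤ h x + h y := le_add_self.trans le_add_self
  calc mdist μ a b ≤ 2 * ∫⁻ x, h x ∂μ :=
        mnorm_le_two_mul_lintegral hdiag hh_meas hh_fin (fun x => by simp [ha.2.1, hb.2.1]) hdom
    _ = 2 * (ENNReal.ofReal (2 * ε) + (D + D) / (m * m) + ENNReal.ofReal R * μ Uᶜ) := by
      simp only [h, ENNReal.div_eq_inv_mul]
      rw [lintegral_add_right _ (measurable_const.indicator hU.compl),
        lintegral_add_left measurable_const,
        lintegral_const_mul _ (hH_meas.add_const D), lintegral_add_left hH_meas, hHD,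
        lintegral_const, lintegral_const,
        lintegral_indicator_const hU.compl, measure_univ, mul_one, mul_one]
    _ ≤ 2 * (ENNReal.ofReal (2 * ε) + (D + D) / (m * m) + ENNReal.ofReal R * ENNReal.ofReal ε) := by
      gcongr
    _ = ENNReal.ofReal ((4 + 2 * R) * ε) + 4 / (m * m) * D := by
      rw [show (4 + 2 * R) * ε = 2 * (2 * ε + R * ε) by ring,
        ENNReal.ofReal_mul (p := 2) (q := 2 * ε + R * ε) zero_le_two, ENNReal.ofReal_ofNat,
        ENNReal.ofReal_add (by positivity) (by positivity), ENNReal.ofReal_mul hR]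
      simp only [div_eq_mul_inv]
      ring

theorem exists_finset_cover_of_separableOn {ρ : X → X → ℝ} (hρ : IsSemimetric ρ)
    (hρ_meas : Measurable (uncurry ρ)) {S : Set X} (hS : μ Sᶜ = 0) (hsep : SeparableOn ρ S)
    {ε : ℝ} (hε : 0 < ε) :
    ∃ (s : Finset ℕ) (Y : ℕ → Set X) (m : ℝ≥0∞), m ≠ 0 ∧ (∀ i ∈ s, MeasurableSet (Y i)) ∧
      (∀ i ∈ s, m ≤ μ (Y i)) ∧ (∀ i ∈ s, ∀ x ∈ Y i, ∀ y ∈ Y i, ρ x y < ε) ∧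
      μ (⋃ i ∈ s, Y i)ᶜ ≤ ENNReal.ofReal ε := by
  obtain ⟨-, -, hρ_symm, hρ_tri⟩ := hρ
  obtain ⟨D, -, hD, hD_dense⟩ := hsep
  obtain ⟨x₀, hx₀⟩ : S.Nonempty := nonempty_of_measure_ne_zero (μ := μ) fun h => by
    simpa [h, hS] using measure_univ_le_add_compl (μ := μ) S
  obtain ⟨e, rfl⟩ := hD.exists_eq_range <|
    let ⟨y, hy, _⟩ := hD_dense x₀ hx₀ 1 one_pos; ⟨y, hy⟩
  set B : ℕ → Set X := fun i => {x | ρ x (e i) < ε / 2}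
  have hB (i : ℕ) : MeasurableSet (B i) :=
    measurableSet_lt (hρ_meas.comp (measurable_id.prodMk measurable_const)) measurable_const
  have hB_cov : μ (⋃ i, B i)ᶜ = 0 := by
    refine measure_mono_null (compl_subset_compl.2 fun x hx => ?_) hS
    obtain ⟨_, ⟨i, rfl⟩, hxi⟩ := hD_dense x hx (ε / 2) (half_pos hε)
    exact mem_iUnion.2 ⟨i, hxi⟩
  obtain ⟨s, hs_pos, hs_cov⟩ :=
    exists_finset_measure_compl_biUnion_lt hB hB_cov (ENNReal.ofReal_pos.2 hε)
  refine ⟨s, B, s.inf fun i => μ (B i),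
    ((Finset.lt_inf_iff ENNReal.zero_lt_top).2 hs_pos).ne', fun i _ => hB i,
    fun i hi => Finset.inf_le hi, fun i _ x hx y hy => ?_, hs_cov.le⟩
  linarith [hρ_tri x (e i) y, hρ_symm (e i) y, show ρ x (e i) < ε / 2 from hx,
    show ρ y (e i) < ε / 2 from hy]

end ProbabilitySpace

/-- a sequence of measurable semimetrics uniformly bounded by `R` which
converges in `L¹(X×X, μ×μ)` to an admissible semimetric bounded by `R` also converges to
it in the m-norm. -/
theorem statement8 {X : Type*} [MeasurableSpace X] [StandardBorelSpace X]
    (μ : Measure X) [IsProbabilityMeasure μ] (R : ℝ) (hR : 0 < R)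
    (ρn : ℕ → X → X → ℝ) (ρ : X → X → ℝ)
    (hρn : ∀ n, IsSemimetric (ρn n)) (hρnmeas : ∀ n, Measurable (Function.uncurry (ρn n)))
    (hρnbdd : ∀ n x y, ρn n x y ≤ R)
    (hρ : IsSemimetric ρ) (hρadm : Admissible μ ρ) (hρbdd : ∀ x y, ρ x y ≤ R)
    (hconv : Tendsto (fun n => L1dist μ (ρn n) ρ) atTop (nhds 0)) :
    Tendsto (fun n => mdist μ (ρn n) ρ) atTop (nhds 0) := by
  obtain ⟨hρ_meas, S, -, hS, hsep⟩ := hρadm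
  refine tendsto_zero_of_forall_le_ofReal_add_mul hconv fun η hη => ?_
  have hc : 0 < 4 + 2 * R := by positivity
  obtain ⟨s, Y, m, hm, hY_meas, hmY, hY_diam, hcov⟩ :=
    exists_finset_cover_of_separableOn hρ hρ_meas hS hsep (div_pos hη hc)
  refine ⟨4 / (m * m), ENNReal.div_ne_top (by norm_num) (mul_ne_zero hm hm), fun n => ?_⟩
  have hab (x y : X) : |ρn n x y - ρ x y| ≤ R :=
    abs_sub_le_of_nonneg_of_le ((hρn n).1 x y) (hρnbdd n x y) (hρ.1 x y) (hρbdd x y)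
  simpa [mul_div_cancel₀ _ hc.ne'] using mdist_le_of_cover measurableSet_diagonal (hρn n) hρ
    (hρnmeas n) hρ_meas hR.le hab (div_pos hη hc).le hY_meas hY_diam hm hmY hcov
end

section
/- Let (X, μ) be a standard Borel probability space, let p be a summable measurable semimetric on X, and let R > 0. Denote by p^{2R} the cut-off p^{2R}(x,y) = min(p(x,y), 2R). Then ‖p − p^{2R}‖_m ≤ 2 ∫∫_{{(x,y) : p(x,y) > R}} p(x,y) dμ(x)dμ(y). -/
open MeasureTheory Filter Function Set
open scoped ENNReal

/-!
Pick a base point `x₀` and let `g x = (ρ(x, x₀) - R)⁺`. The function `min(ρ(x, y), g x + g y)` is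
again a semimetric, and it dominates `ρ - min(ρ, 2R)`: where `ρ(x, y) > 2R`, the triangle
inequality through `x₀` gives `ρ(x, y) - 2R ≤ g x + g y`. Its integral is at most `2 ∫ g`, and
averaging over `x₀` shows that `x₀` can be chosen with `∫ g ≤ ∫∫ (ρ - R)⁺ ≤ ∫∫_{ρ > R} ρ`.
-/

section Cutoff

variable {X : Type*}

def excess (ρ : X → X → ℝ) (x₀ : X) (R : ℝ) (x : X) : ℝ := max (ρ x x₀ - R) 0

lemma excess_nonneg (ρ : X → X → ℝ) (x₀ : X) (R : ℝ) (x : X) : 0 ≤ excess ρ x₀ R x :=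
  le_max_right _ _

lemma measurable_excess [MeasurableSpace X] {ρ : X → X → ℝ} (hρ : Measurable (uncurry ρ))
    (x₀ : X) (R : ℝ) : Measurable (excess ρ x₀ R) :=
  ((hρ.comp (measurable_id.prodMk measurable_const)).sub measurable_const).max measurable_const

namespace IsSemimetric

variable {ρ : X → X → ℝ}

lemma min_add {g : X → ℝ} (hρ : IsSemimetric ρ) (hg₀ : ∀ x, 0 ≤ g x)
    (hg : ∀ x y, g x ≤ ρ x y + g y) : IsSemimetric fun x y => min (ρ x y) (g x + g y) := by
  obtain ⟨hnn, hdiag, hsymm, htri⟩ := hρ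
  refine ⟨fun x y => le_min (hnn x y) (add_nonneg (hg₀ x) (hg₀ y)), fun x => ?_,
    fun x y => by simp only [hsymm x y, add_comm], fun x y z => ?_⟩ <;> beta_reduce
  · rw [hdiag, min_eq_left (add_nonneg (hg₀ x) (hg₀ x))]
  · have := htri x y z
    have := hg x y
    have := hg z y
    have := hsymm y z
    have := hg₀ y
    rcases min_choice (ρ x y) (g x + g y) with h₁ | h₁ <;>
      rcases min_choice (ρ y z) (g y + g z) with h₂ | h₂ <;>
      · rw [h₁, h₂]
        linarith [min_le_left (ρ x z) (g x + g z), min_le_right (ρ x z) (g x + g z)]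

lemma excess_le_add (hρ : IsSemimetric ρ) (x₀ : X) (R : ℝ) (x y : X) :
    excess ρ x₀ R x ≤ ρ x y + excess ρ x₀ R y := by
  unfold excess
  have := hρ.2.2.2 x y x₀
  have := hρ.1 x y
  exact max_le (by linarith [le_max_left (ρ y x₀ - R) 0])
    (by linarith [le_max_right (ρ y x₀ - R) 0])

lemma abs_sub_min_le_min_excess_add (hρ : IsSemimetric ρ) (x₀ : X) {R : ℝ} (hR : 0 ≤ R)
    (x y : X) :
    |ρ x y - min (ρ x y) (2 * R)| ≤ min (ρ x y) (excess ρ x₀ R x + excess ρ x₀ R y) := by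
  obtain ⟨hnn, -, hsymm, htri⟩ := hρ
  rcases le_or_gt (ρ x y) (2 * R) with hle | hlt
  · rw [min_eq_left hle, sub_self, abs_zero]
    exact le_min (hnn x y) (add_nonneg (excess_nonneg ρ x₀ R x) (excess_nonneg ρ x₀ R y))
  · rw [min_eq_right hlt.le, abs_of_nonneg (by linarith)]
    have := htri x x₀ y
    have := hsymm x₀ y
    have := le_max_left (ρ x x₀ - R) 0
    have := le_max_left (ρ y x₀ - R) 0
    exact le_min (by linarith) (by unfold excess; linarith)

end IsSemimetric

section Integrals

variable [MeasurableSpace X]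

lemma mnorm_le_lintegral_s9 {μ : Measure X} {f σ : X → X → ℝ} (hσ : IsSemimetric σ)
    (hσm : Measurable (uncurry σ)) (hf : ∀ᵐ q ∂(μ.prod μ), |f q.1 q.2| ≤ σ q.1 q.2) :
    mnorm μ f ≤ ∫⁻ q, ENNReal.ofReal (σ q.1 q.2) ∂(μ.prod μ) :=
  sInf_le ⟨σ, hσ, hσm, hf, rfl⟩

lemma lintegral_fst_add_snd_prod {Y : Type*} [MeasurableSpace Y] (μ : Measure X) (ν : Measure Y)
    [IsProbabilityMeasure μ] [IsProbabilityMeasure ν] {f : X → ℝ≥0∞} {g : Y → ℝ≥0∞}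
    (hf : Measurable f) (hg : Measurable g) :
    ∫⁻ q, f q.1 + g q.2 ∂(μ.prod ν) = ∫⁻ x, f x ∂μ + ∫⁻ y, g y ∂ν := by
  rw [lintegral_add_left (f := fun q : X × Y => f q.1) (hf.comp measurable_fst),
    measurePreserving_fst.lintegral_comp hf, measurePreserving_snd.lintegral_comp hg]

lemma exists_lintegral_le_lintegral_prod {Y : Type*} [MeasurableSpace Y] (μ : Measure X)
    (ν : Measure Y) [SFinite μ] [IsProbabilityMeasure ν] {F : X × Y → ℝ≥0∞}
    (hF : Measurable F) : ∃ y, ∫⁻ x, F (x, y) ∂μ ≤ ∫⁻ q, F q ∂(μ.prod ν) := by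
  rw [lintegral_prod_symm' F hF]
  exact exists_le_lintegral hF.lintegral_prod_left'.aemeasurable

lemma lintegral_ofReal_max_sub_le_setLIntegral {α : Type*} [MeasurableSpace α] (ν : Measure α)
    {f : α → ℝ} (hf : Measurable f) {R : ℝ} (hR : 0 ≤ R) :
    ∫⁻ q, ENNReal.ofReal (max (f q - R) 0) ∂ν ≤
      ∫⁻ q in {q | R < f q}, ENNReal.ofReal (f q) ∂ν := by
  rw [← lintegral_indicator (measurableSet_lt measurable_const hf)]
  refine lintegral_mono fun q => ?_
  by_cases hq : R < f q
  · rw [Set.indicator_of_mem (show q ∈ {q | R < f q} from hq)]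
    exact ENNReal.ofReal_le_ofReal (max_le (by linarith) (by linarith))
  · rw [Set.indicator_of_notMem (show q ∉ {q | R < f q} from hq), max_eq_right (by linarith),
      ENNReal.ofReal_zero]

end Integrals

end Cutoff

theorem statement9_general {X : Type*} [MeasurableSpace X]
    (μ : Measure X) [IsProbabilityMeasure μ] (ρ : X → X → ℝ)
    (hρ : IsSemimetric ρ) (hmeas : Measurable (Function.uncurry ρ))
    (R : ℝ) (hR : 0 < R) :
    mnorm μ (fun x y => ρ x y - min (ρ x y) (2 * R)) ≤
      2 * ∫⁻ q in {q : X × X | R < ρ q.1 q.2}, ENNReal.ofReal (ρ q.1 q.2) ∂(μ.prod μ) := by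
  have hF : Measurable fun q : X × X => ENNReal.ofReal (max (ρ q.1 q.2 - R) 0) :=
    ((hmeas.sub measurable_const).max measurable_const).ennreal_ofReal
  obtain ⟨x₀, hx₀⟩ := exists_lintegral_le_lintegral_prod μ μ hF
  set g := excess ρ x₀ R
  have hg : Measurable g := measurable_excess hmeas x₀ R
  calc mnorm μ (fun x y => ρ x y - min (ρ x y) (2 * R))
      ≤ ∫⁻ q, ENNReal.ofReal (min (ρ q.1 q.2) (g q.1 + g q.2)) ∂(μ.prod μ) :=
        mnorm_le_lintegral_s9 (hρ.min_add (excess_nonneg ρ x₀ R) (hρ.excess_le_add x₀ R))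
          (hmeas.min ((hg.comp measurable_fst).add (hg.comp measurable_snd)))
          (ae_of_all _ fun q => hρ.abs_sub_min_le_min_excess_add x₀ hR.le q.1 q.2)
    _ ≤ ∫⁻ q, ENNReal.ofReal (g q.1) + ENNReal.ofReal (g q.2) ∂(μ.prod μ) :=
        lintegral_mono fun q => (ENNReal.ofReal_le_ofReal (min_le_right _ _)).trans
          ENNReal.ofReal_add_le
    _ = 2 * ∫⁻ x, ENNReal.ofReal (g x) ∂μ := by
        rw [lintegral_fst_add_snd_prod μ μ hg.ennreal_ofReal hg.ennreal_ofReal, two_mul]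
    _ ≤ 2 * ∫⁻ q in {q : X × X | R < ρ q.1 q.2}, ENNReal.ofReal (ρ q.1 q.2) ∂(μ.prod μ) := by
        gcongr
        exact hx₀.trans (lintegral_ofReal_max_sub_le_setLIntegral _ hmeas hR.le)

/-- cut-off lemma: for a summable measurable semimetric `ρ` and `R > 0`,
the m-norm of `ρ − ρ^{2R}` (where `ρ^{2R} = min(ρ, 2R)`) is at most
`2 ∫∫_{ρ > R} ρ dμ dμ`. -/
theorem statement9 {X : Type*} [MeasurableSpace X] [StandardBorelSpace X]
    (μ : Measure X) [IsProbabilityMeasure μ] (ρ : X → X → ℝ)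
    (hρ : IsSemimetric ρ) (hmeas : Measurable (Function.uncurry ρ))
    (hint : Integrable (Function.uncurry ρ) (μ.prod μ)) (R : ℝ) (hR : 0 < R) :
    mnorm μ (fun x y => ρ x y - min (ρ x y) (2 * R)) ≤
      2 * ∫⁻ q in {q : X × X | R < ρ q.1 q.2}, ENNReal.ofReal (ρ q.1 q.2) ∂(μ.prod μ) :=
  statement9_general μ ρ hρ hmeas R hR
end

section
/- Let (X, μ) be a standard Borel probability space. Suppose a sequence of summable measurable semimetrics ρ_n converges in L¹(X×X, μ×μ) to an admissible summable semimetric ρ. Then ‖ρ_n − ρ‖_m → 0, i.e., the sequence converges to ρ in the m-norm. Consequently, a set of admissible summable semimetrics is compact in the m-norm if and only if it is compact in L¹(X×X, μ×μ). -/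
open MeasureTheory Filter Function Set
open scoped ENNReal

/-- Sequential compactness of a set of functions with respect to an extended distance. -/
def SeqCompactIn {X : Type*} (d : (X → X → ℝ) → (X → X → ℝ) → ℝ≥0∞)
    (M : Set (X → X → ℝ)) : Prop :=
  ∀ u : ℕ → X → X → ℝ, (∀ n, u n ∈ M) →
    ∃ g ∈ M, ∃ φ : ℕ → ℕ, StrictMono φ ∧
      Filter.Tendsto (fun n => d (u (φ n)) g) Filter.atTop (nhds 0)

open Topology

/-!
Write `d = ρₙ - ρ` and `K x = ∫ |d x w| dμ(w)`, so that `∫ K = ‖d‖₁`. If a measurable `g` satisfies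
`|d x y| ≤ g x + g y`, the semimetric equal to `g x + g y` off the diagonal dominates `|d|`, so
`‖d‖_m ≤ 2 ∫ g`. Averaging the four-point inequality
`|d x y| ≤ 4e + |d x w| + |d y v| + |d w v|` (for `ρ x w, ρ y v ≤ e`) over `w`, `v` in the
`ρ`-balls of radius `e` around `x` and `y` gives `|d x y| ≤ 4e + (K x + K y) / m + ‖d‖₁ / m²`
whenever both balls have measure at least `m`. Since `ρ` is separable on a set of full measure,
almost every such ball has positive measure, so for small `m` the points whose ball is lighter
than `m` carry an arbitrarily small part of `∫ ρ`; there the three-point inequality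
`|d x y| ≤ K x + 2 ∫ ρ x w dμ(w) + K y` suffices. Altogether `‖d‖_m ≤ 12e + C(e) ‖d‖₁` for every
`e > 0`. The compactness statement follows because `‖·‖₁ ≤ ‖·‖_m`.
-/

lemma IsSemimetric.abs_sub_le_s10 {X : Type*} {ρ : X → X → ℝ} (hρ : IsSemimetric ρ) (x y z : X) :
    |ρ x z - ρ y z| ≤ ρ x y := by
  obtain ⟨-, -, hsymm, htri⟩ := hρ
  rw [abs_sub_le_iff]
  constructor
  · linarith [htri x y z]
  · linarith [htri y x z, hsymm x y]

section Difference

variable {X : Type*} {a b : X → X → ℝ}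

lemma abs_diff_le_abs_diff_add (ha : IsSemimetric a) (hb : IsSemimetric b) (x y w : X) :
    |a x y - b x y| ≤ |a w y - b w y| + (a x w + b x w) := by
  have h₁ := abs_le.mp (ha.abs_sub_le_s10 x w y)
  have h₂ := abs_le.mp (hb.abs_sub_le_s10 x w y)
  have h₃ := le_abs_self (a w y - b w y)
  have h₄ := neg_abs_le (a w y - b w y)
  rw [abs_le]
  constructor <;> linarith

lemma abs_diff_le_row (ha : IsSemimetric a) (hb : IsSemimetric b) (x y w : X) :
    |a x y - b x y| ≤ |a x w - b x w| + 2 * b x w + |a y w - b y w| := by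
  have h := abs_diff_le_abs_diff_add ha hb x y w
  rw [ha.2.2.1 w y, hb.2.2.1 w y] at h
  linarith [le_abs_self (a x w - b x w)]

lemma abs_diff_le_of_near (ha : IsSemimetric a) (hb : IsSemimetric b) {e : ℝ} {x y w v : X}
    (hxw : b x w ≤ e) (hyv : b y v ≤ e) :
    |a x y - b x y| ≤ 4 * e + |a x w - b x w| + |a y v - b y v| + |a w v - b w v| := by
  have h₁ := abs_diff_le_abs_diff_add ha hb x y w
  have h₂ := abs_diff_le_abs_diff_add ha hb y w v
  rw [ha.2.2.1 w y, hb.2.2.1 w y] at h₁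
  rw [ha.2.2.1 v w, hb.2.2.1 v w] at h₂
  linarith [le_abs_self (a x w - b x w), le_abs_self (a y v - b y v)]

end Difference

lemma le_add_inv_mul_of_mul_le {c E p q r s t m : ℝ≥0∞} (hm₀ : m ≠ 0) (hm : m ≠ ∞)
    (hs : m ≤ s) (ht : m ≤ t) (hs' : s ≠ ∞) (ht' : t ≠ ∞)
    (h : c * (s * t) ≤ E * (s * t) + p * t + q * s + r) :
    c ≤ E + r * (m * m)⁻¹ + p * m⁻¹ + q * m⁻¹ := by
  have hm_le {u : ℝ≥0∞} (hu : m ≤ u) : 1 ≤ m⁻¹ * u := by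
    rw [← ENNReal.inv_mul_cancel hm₀ hm]; gcongr
  have hmm_le : 1 ≤ (m * m)⁻¹ * (s * t) := by
    rw [← ENNReal.inv_mul_cancel (mul_ne_zero hm₀ hm₀) (ENNReal.mul_ne_top hm hm)]; gcongr
  have hs₀ : s ≠ 0 := (pos_iff_ne_zero.mpr hm₀).trans_le hs |>.ne'
  have ht₀ : t ≠ 0 := (pos_iff_ne_zero.mpr hm₀).trans_le ht |>.ne'
  rw [← ENNReal.mul_le_mul_iff_left (mul_ne_zero hs₀ ht₀) (ENNReal.mul_ne_top hs' ht')]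
  calc c * (s * t) ≤ E * (s * t) + p * t + q * s + r := h
    _ ≤ E * (s * t) + p * (m⁻¹ * s) * t + q * (m⁻¹ * t) * s + r * ((m * m)⁻¹ * (s * t)) := by
      gcongr
      · exact le_mul_of_one_le_right' (hm_le hs)
      · exact le_mul_of_one_le_right' (hm_le ht)
      · exact le_mul_of_one_le_right' hmm_le
    _ = (E + r * (m * m)⁻¹ + p * m⁻¹ + q * m⁻¹) * (s * t) := by ring

noncomputable def rowL1dist {X : Type*} [MeasurableSpace X] (μ : Measure X) (a b : X → X → ℝ)
    (x : X) : ℝ≥0∞ :=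
  ∫⁻ w, ENNReal.ofReal |a x w - b x w| ∂μ

noncomputable def rowLIntegral {X : Type*} [MeasurableSpace X] (μ : Measure X)
    (b : X → X → ℝ) (x : X) : ℝ≥0∞ :=
  ∫⁻ w, ENNReal.ofReal (b x w) ∂μ

section Rows

variable {X : Type*} [MeasurableSpace X] {μ : Measure X} {a b : X → X → ℝ}

lemma measurable_ofReal_abs_diff (ha : Measurable (uncurry a)) (hb : Measurable (uncurry b)) :
    Measurable fun p : X × X => ENNReal.ofReal |a p.1 p.2 - b p.1 p.2| :=
  ENNReal.measurable_ofReal.comp (ha.sub hb).abs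

lemma ofReal_abs_diff_le_row [IsProbabilityMeasure μ] (ha : IsSemimetric a)
    (hb : IsSemimetric b) (ha' : Measurable (uncurry a)) (hb' : Measurable (uncurry b))
    (x y : X) :
    ENNReal.ofReal |a x y - b x y| ≤
      rowL1dist μ a b x + 2 * rowLIntegral μ b x + rowL1dist μ a b y := by
  calc ENNReal.ofReal |a x y - b x y| = ∫⁻ _, ENNReal.ofReal |a x y - b x y| ∂μ := by simp
    _ ≤ ∫⁻ w, (ENNReal.ofReal |a x w - b x w| + 2 * ENNReal.ofReal (b x w) +
          ENNReal.ofReal |a y w - b y w|) ∂μ := by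
      refine lintegral_mono fun w => ?_
      rw [← ENNReal.ofReal_ofNat 2, ← ENNReal.ofReal_mul zero_le_two,
        ← ENNReal.ofReal_add (abs_nonneg _) (by linarith [hb.1 x w]),
        ← ENNReal.ofReal_add (by linarith [hb.1 x w, abs_nonneg (a x w - b x w)]) (abs_nonneg _)]
      exact ENNReal.ofReal_le_ofReal (abs_diff_le_row ha hb x y w)
    _ = _ := by
      have hrow (c : X → X → ℝ) (hc : Measurable (uncurry c)) (z : X) :
          Measurable fun w => ENNReal.ofReal (c z w) :=
        (ENNReal.measurable_ofReal.comp hc).comp measurable_prodMk_left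
      rw [lintegral_add_right _ (hrow (fun x w => |a x w - b x w|) (ha'.sub hb').abs y),
        lintegral_add_right _ ((hrow b hb' x).const_mul 2), lintegral_const_mul _ (hrow b hb' x)]
      rfl

variable [SFinite μ]

lemma measurable_rowL1dist (ha : Measurable (uncurry a)) (hb : Measurable (uncurry b)) :
    Measurable (rowL1dist μ a b) :=
  (measurable_ofReal_abs_diff ha hb).lintegral_prod_right'

lemma lintegral_rowL1dist (ha : Measurable (uncurry a)) (hb : Measurable (uncurry b)) :
    ∫⁻ x, rowL1dist μ a b x ∂μ = L1dist μ a b :=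
  (lintegral_prod _ (measurable_ofReal_abs_diff ha hb).aemeasurable).symm

lemma measurable_rowLIntegral (hb : Measurable (uncurry b)) : Measurable (rowLIntegral μ b) :=
  (ENNReal.measurable_ofReal.comp hb).lintegral_prod_right'

lemma lintegral_rowLIntegral (hb : Measurable (uncurry b)) :
    ∫⁻ x, rowLIntegral μ b x ∂μ = ∫⁻ p, ENNReal.ofReal (b p.1 p.2) ∂(μ.prod μ) :=
  (lintegral_prod _ (ENNReal.measurable_ofReal.comp hb).aemeasurable).symm

lemma ofReal_abs_diff_mul_le (ha : IsSemimetric a) (hb : IsSemimetric b)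
    (ha' : Measurable (uncurry a)) (hb' : Measurable (uncurry b)) {e : ℝ} {x y : X}
    {U V : Set X} (hxU : ∀ w ∈ U, b x w ≤ e) (hyV : ∀ v ∈ V, b y v ≤ e) :
    ENNReal.ofReal |a x y - b x y| * (μ U * μ V) ≤
      ENNReal.ofReal (4 * e) * (μ U * μ V) + rowL1dist μ a b x * μ V +
        rowL1dist μ a b y * μ U + L1dist μ a b := by
  set δ : X → X → ℝ≥0∞ := fun x w => ENNReal.ofReal |a x w - b x w|
  have hδ : Measurable (uncurry δ) := measurable_ofReal_abs_diff ha' hb'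
  have hδrow (z : X) : Measurable (δ z) := hδ.of_uncurry_left
  calc ENNReal.ofReal |a x y - b x y| * (μ U * μ V)
      = ∫⁻ _ in U ×ˢ V, ENNReal.ofReal |a x y - b x y| ∂(μ.prod μ) := by
        rw [setLIntegral_const, Measure.prod_prod]
    _ ≤ ∫⁻ p in U ×ˢ V, (ENNReal.ofReal (4 * e) + δ x p.1 + δ y p.2 + δ p.1 p.2)
          ∂(μ.prod μ) := by
        refine setLIntegral_mono (by fun_prop) fun p hp => ?_
        refine (ENNReal.ofReal_le_ofReal
          (abs_diff_le_of_near ha hb (hxU _ hp.1) (hyV _ hp.2))).trans ?_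
        refine ENNReal.ofReal_add_le.trans (add_le_add ?_ le_rfl)
        refine ENNReal.ofReal_add_le.trans (add_le_add ?_ le_rfl)
        exact ENNReal.ofReal_add_le
    _ = ENNReal.ofReal (4 * e) * (μ U * μ V) + (∫⁻ w in U, δ x w ∂μ) * μ V +
          (∫⁻ v in V, δ y v ∂μ) * μ U + ∫⁻ p in U ×ˢ V, δ p.1 p.2 ∂(μ.prod μ) := by
        rw [lintegral_add_right _ (by fun_prop), lintegral_add_right _ (by fun_prop),
          lintegral_add_right _ (by fun_prop), setLIntegral_const, Measure.prod_prod,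
          setLIntegral_prod _ (by fun_prop), setLIntegral_prod _ (by fun_prop)]
        simp only [setLIntegral_const, lintegral_mul_const _ (hδrow x)]
    _ ≤ _ := by
        gcongr
        · exact setLIntegral_le_lintegral _ _
        · exact setLIntegral_le_lintegral _ _
        · exact setLIntegral_le_lintegral _ _

lemma ofReal_abs_diff_le_of_le_measure [IsFiniteMeasure μ] (ha : IsSemimetric a)
    (hb : IsSemimetric b) (ha' : Measurable (uncurry a)) (hb' : Measurable (uncurry b))
    {e : ℝ} {m : ℝ≥0∞} (hm₀ : m ≠ 0) (hm : m ≠ ∞) {x y : X}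
    (hx : m ≤ μ {w | b x w < e}) (hy : m ≤ μ {w | b y w < e}) :
    ENNReal.ofReal |a x y - b x y| ≤ ENNReal.ofReal (4 * e) + L1dist μ a b * (m * m)⁻¹ +
      rowL1dist μ a b x * m⁻¹ + rowL1dist μ a b y * m⁻¹ :=
  le_add_inv_mul_of_mul_le hm₀ hm hx hy (measure_ne_top _ _) (measure_ne_top _ _)
    (ofReal_abs_diff_mul_le ha hb ha' hb' (fun _ hw => le_of_lt hw) fun _ hv => le_of_lt hv)

lemma measurable_measure_setOf_lt (hb : Measurable (uncurry b)) (e : ℝ) :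
    Measurable fun x => μ {w | b x w < e} :=
  measurable_measure_prodMk_left (measurableSet_lt hb measurable_const)

end Rows

open Classical in
noncomputable def sumSemimetric {X : Type*} (u : X → ℝ) (x y : X) : ℝ :=
  if x = y then 0 else u x + u y

section SumSemimetric

variable {X : Type*} {u : X → ℝ}

lemma isSemimetric_sumSemimetric (hu : ∀ x, 0 ≤ u x) : IsSemimetric (sumSemimetric u) := by
  refine ⟨fun x y => ?_, fun x => if_pos rfl, fun x y => ?_, fun x y z => ?_⟩ <;>
    simp only [sumSemimetric]
  · split_ifs <;> linarith [hu x, hu y]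
  · by_cases h : x = y
    · simp [h]
    · simp [h, Ne.symm h, add_comm]
  · by_cases hxy : x = y
    · subst hxy; split_ifs <;> linarith [hu x, hu z]
    · by_cases hyz : y = z
      · subst hyz; split_ifs <;> linarith [hu x, hu y]
      · split_ifs <;> linarith [hu x, hu y, hu z]

lemma measurable_sumSemimetric [MeasurableSpace X] [MeasurableEq X] (hu : Measurable u) :
    Measurable (uncurry (sumSemimetric u)) :=
  Measurable.ite (measurableSet_eq_fun measurable_fst measurable_snd) measurable_const
    ((hu.comp measurable_fst).add (hu.comp measurable_snd))

end SumSemimetric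

lemma mnorm_le_two_mul_lintegral_s10 {X : Type*} [MeasurableSpace X] [MeasurableEq X]
    {μ : Measure X} [IsProbabilityMeasure μ] {f : X → X → ℝ} (hf : ∀ x, f x x = 0)
    {g : X → ℝ≥0∞} (hg : Measurable g) (hfg : ∀ x y, ENNReal.ofReal |f x y| ≤ g x + g y) :
    mnorm μ f ≤ 2 * ∫⁻ x, g x ∂μ := by
  by_cases hg_top : ∫⁻ x, g x ∂μ = ∞
  · simp [hg_top]
  set σ := sumSemimetric fun x => (g x).toReal
  have hσ_le (x y : X) : ENNReal.ofReal (σ x y) ≤ g x + g y := by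
    unfold σ sumSemimetric
    split_ifs
    · simp
    · exact ENNReal.ofReal_add_le.trans
        (add_le_add ENNReal.ofReal_toReal_le ENNReal.ofReal_toReal_le)
  have hfin : ∀ᵐ x ∂μ, g x ≠ ∞ := (ae_lt_top hg hg_top).mono fun _ => ne_of_lt
  have hfin₂ : ∀ᵐ p ∂(μ.prod μ), g p.1 ≠ ∞ ∧ g p.2 ≠ ∞ :=
    (measurePreserving_fst.quasiMeasurePreserving.ae hfin).and
      (measurePreserving_snd.quasiMeasurePreserving.ae hfin)
  have hdom : ∀ᵐ p ∂(μ.prod μ), |f p.1 p.2| ≤ σ p.1 p.2 := by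
    filter_upwards [hfin₂] with p ⟨h₁, h₂⟩
    unfold σ sumSemimetric
    split_ifs with h
    · simp [h, hf]
    · rw [← ENNReal.toReal_add h₁ h₂]
      exact (ENNReal.ofReal_le_iff_le_toReal (ENNReal.add_ne_top.2 ⟨h₁, h₂⟩)).1 (hfg _ _)
  calc mnorm μ f ≤ ∫⁻ p, ENNReal.ofReal (σ p.1 p.2) ∂(μ.prod μ) :=
        sInf_le ⟨σ, isSemimetric_sumSemimetric fun _ => ENNReal.toReal_nonneg,
          measurable_sumSemimetric hg.ennreal_toReal, hdom, rfl⟩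
    _ ≤ ∫⁻ p, (g p.1 + g p.2) ∂(μ.prod μ) := lintegral_mono fun p => hσ_le p.1 p.2
    _ = 2 * ∫⁻ x, g x ∂μ := by
      rw [lintegral_add_left (by fun_prop : Measurable fun p : X × X => g p.1),
        measurePreserving_fst.lintegral_comp hg, measurePreserving_snd.lintegral_comp hg, two_mul]

lemma mdist_le_of_measure_ball {X : Type*} [MeasurableSpace X] [MeasurableEq X]
    {μ : Measure X} [IsProbabilityMeasure μ] {a b : X → X → ℝ}
    (ha : IsSemimetric a) (hb : IsSemimetric b)
    (ha' : Measurable (uncurry a)) (hb' : Measurable (uncurry b))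
    (e : ℝ) {m : ℝ≥0∞} (hm₀ : m ≠ 0) (hm : m ≠ ∞) :
    mdist μ a b ≤ 2 * (ENNReal.ofReal (4 * e) + L1dist μ a b * (m * m)⁻¹ +
      L1dist μ a b * m⁻¹ + (L1dist μ a b +
        2 * ∫⁻ x in {x | μ {w | b x w < e} < m}, rowLIntegral μ b x ∂μ)) := by
  set B := {x | μ {w | b x w < e} < m}
  have hB : MeasurableSet B := measurableSet_lt (measurable_measure_setOf_lt hb' e) measurable_const
  set K := rowL1dist μ a b
  set H := rowLIntegral μ b
  set L := L1dist μ a b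
  have hK : Measurable K := measurable_rowL1dist ha' hb'
  set g₀ : X → ℝ≥0∞ := fun x => ENNReal.ofReal (4 * e) + L * (m * m)⁻¹ + K x * m⁻¹
  set g₁ : X → ℝ≥0∞ := fun x => K x + 2 * B.indicator H x
  have hbad (x y : X) (hx : x ∈ B) :
      ENNReal.ofReal |a x y - b x y| ≤ (g₀ x + g₁ x) + (g₀ y + g₁ y) :=
    calc ENNReal.ofReal |a x y - b x y| ≤ K x + 2 * H x + K y :=
          ofReal_abs_diff_le_row ha hb ha' hb' x y
      _ ≤ g₁ x + g₁ y := by simp only [g₁, indicator_of_mem hx]; gcongr; exact le_self_add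
      _ ≤ _ := add_le_add le_add_self le_add_self
  have hdom (x y : X) : ENNReal.ofReal |a x y - b x y| ≤ (g₀ x + g₁ x) + (g₀ y + g₁ y) := by
    by_cases hx : x ∈ B
    · exact hbad x y hx
    by_cases hy : y ∈ B
    · rw [ha.2.2.1, hb.2.2.1, add_comm]
      exact hbad y x hy
    simp only [B, mem_ofPred_eq, not_lt] at hx hy
    calc ENNReal.ofReal |a x y - b x y| ≤ g₀ x + K y * m⁻¹ :=
          ofReal_abs_diff_le_of_le_measure ha hb ha' hb' hm₀ hm hx hy
      _ ≤ g₀ x + g₀ y := add_le_add le_rfl le_add_self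
      _ ≤ _ := add_le_add le_self_add le_self_add
  have hg₀ : Measurable g₀ := measurable_const.add (hK.mul_const _)
  have hg₁ : Measurable g₁ :=
    hK.add (((measurable_rowLIntegral hb').indicator hB).const_mul 2)
  refine (mnorm_le_two_mul_lintegral_s10 (fun x => by simp [ha.2.1, hb.2.1]) (hg₀.add hg₁)
    hdom).trans_eq ?_
  have hKL : ∫⁻ x, K x ∂μ = L := lintegral_rowL1dist ha' hb'
  rw [Pi.add_def, lintegral_add_left hg₀, lintegral_add_left measurable_const, lintegral_const,
    measure_univ, mul_one, lintegral_mul_const _ hK, lintegral_add_left hK,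
    lintegral_const_mul _ ((measurable_rowLIntegral hb').indicator hB), lintegral_indicator hB,
    hKL]

lemma Admissible.ae_pos_measure_ball {X : Type*} [MeasurableSpace X] {μ : Measure X}
    {ρ : X → X → ℝ} (hρ : IsSemimetric ρ) (hadm : Admissible μ ρ) {e : ℝ} (he : 0 < e) :
    ∀ᵐ x ∂μ, 0 < μ {w | ρ x w < e} := by
  obtain ⟨-, S, -, hS, D, -, hD, hdense⟩ := hadm
  set ball : X → Set X := fun y => {w | ρ y w < e / 2}
  have hnull : μ (⋃ y ∈ {y ∈ D | μ (ball y) = 0}, ball y) = 0 :=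
    (measure_biUnion_null_iff (hD.mono (sep_subset _ _))).2 fun _ hy => hy.2
  filter_upwards [mem_ae_iff.2 hS, measure_eq_zero_iff_ae_notMem.1 hnull] with x hxS hx
  obtain ⟨y, hyD, hxy⟩ := hdense x hxS (e / 2) (half_pos he)
  have hy : μ (ball y) ≠ 0 := fun h =>
    hx (mem_biUnion (x := y) ⟨hyD, h⟩ (show ρ y x < e / 2 from hρ.2.2.1 y x ▸ hxy))
  refine (pos_iff_ne_zero.2 hy).trans_le (measure_mono fun w (hw : ρ y w < e / 2) => ?_)
  show ρ x w < e
  linarith [hρ.2.2.2 x y w]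

lemma exists_setLIntegral_setOf_lt_le {X : Type*} [MeasurableSpace X] {μ : Measure X}
    {φ h : X → ℝ≥0∞} (hφ : Measurable φ) (hpos : ∀ᵐ x ∂μ, 0 < φ x)
    (hh : ∫⁻ x, h x ∂μ ≠ ∞) {ε : ℝ≥0∞} (hε : 0 < ε) :
    ∃ m : ℝ≥0∞, m ≠ 0 ∧ m ≠ ∞ ∧ ∫⁻ x in {x | φ x < m}, h x ∂μ ≤ ε := by
  set ν := μ.withDensity h
  have := isFiniteMeasure_withDensity hh
  set s : ℕ → Set X := fun k => {x | φ x < ((k : ℝ≥0∞) + 1)⁻¹}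
  have hs (k : ℕ) : MeasurableSet (s k) := measurableSet_lt hφ measurable_const
  have hanti : Antitone s := fun k l hkl x (hx : φ x < _) =>
    show φ x < _ from hx.trans_le (by gcongr)
  have hinter : μ (⋂ k, s k) = 0 := by
    refine measure_mono_null (t := {x | ¬0 < φ x}) (fun x hx hx_pos => ?_) (ae_iff.1 hpos)
    obtain ⟨n, hn⟩ := ENNReal.exists_inv_nat_lt hx_pos.ne'
    have hxn : φ x < ((n : ℝ≥0∞) + 1)⁻¹ := mem_iInter.1 hx n
    exact (hxn.trans_le (by gcongr; exact le_self_add)).not_gt hn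
  have hlim : Tendsto (ν ∘ s) atTop (𝓝 0) := by
    have := tendsto_measure_iInter_atTop (fun k => (hs k).nullMeasurableSet) hanti
      ⟨0, measure_ne_top ν _⟩
    rwa [withDensity_absolutelyContinuous μ h hinter] at this
  obtain ⟨k, hk⟩ := (ENNReal.tendsto_nhds_zero.1 hlim ε hε).exists
  exact ⟨((k : ℝ≥0∞) + 1)⁻¹, by simp, by simp, (withDensity_apply _ (hs k)).symm.trans_le hk⟩

lemma Admissible.exists_mdist_le {X : Type*} [MeasurableSpace X] [MeasurableEq X]
    {μ : Measure X} [IsProbabilityMeasure μ] {ρ : X → X → ℝ} (hρ : IsSemimetric ρ)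
    (hadm : Admissible μ ρ) (hρi : Integrable (uncurry ρ) (μ.prod μ)) {e : ℝ} (he : 0 < e) :
    ∃ C ≠ ∞, ∀ a : X → X → ℝ, IsSemimetric a → Measurable (uncurry a) →
      mdist μ a ρ ≤ ENNReal.ofReal (12 * e) + L1dist μ a ρ * C := by
  have hH : ∫⁻ x, rowLIntegral μ ρ x ∂μ ≠ ∞ := by
    rw [lintegral_rowLIntegral hadm.1]
    exact hρi.lintegral_lt_top.ne
  obtain ⟨m, hm₀, hm, hbad⟩ := exists_setLIntegral_setOf_lt_le
    (measurable_measure_setOf_lt hadm.1 e) (hadm.ae_pos_measure_ball hρ he) hH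
    (ENNReal.ofReal_pos.2 he)
  have hC : 2 * ((m * m)⁻¹ + m⁻¹ + 1) ≠ ∞ := ENNReal.mul_ne_top ENNReal.ofNat_ne_top
    (ENNReal.add_ne_top.2 ⟨ENNReal.add_ne_top.2 ⟨ENNReal.inv_ne_top.2 (mul_ne_zero hm₀ hm₀),
      ENNReal.inv_ne_top.2 hm₀⟩, ENNReal.one_ne_top⟩)
  refine ⟨_, hC, fun a ha ha' => ?_⟩
  have h12 : ENNReal.ofReal (12 * e) = 2 * (ENNReal.ofReal (4 * e) + 2 * ENNReal.ofReal e) := by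
    rw [← ENNReal.ofReal_ofNat 2, ← ENNReal.ofReal_mul zero_le_two,
      ← ENNReal.ofReal_add (by positivity) (by positivity), ← ENNReal.ofReal_mul zero_le_two]
    ring_nf
  calc mdist μ a ρ ≤ _ := mdist_le_of_measure_ball ha hρ ha' hadm.1 e hm₀ hm
    _ ≤ 2 * (ENNReal.ofReal (4 * e) + L1dist μ a ρ * (m * m)⁻¹ + L1dist μ a ρ * m⁻¹ +
          (L1dist μ a ρ + 2 * ENNReal.ofReal e)) := by gcongr
    _ = _ := by rw [h12]; ring

lemma ENNReal.tendsto_zero_of_le_ofReal_add_mul {ι : Type*} {l : Filter ι} {u v : ι → ℝ≥0∞}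
    (hv : Tendsto v l (𝓝 0))
    (h : ∀ e : ℝ, 0 < e → ∃ C ≠ ∞, ∀ i, u i ≤ ENNReal.ofReal e + v i * C) :
    Tendsto u l (𝓝 0) := by
  rw [ENNReal.tendsto_nhds_zero]
  intro ε hε
  rcases eq_or_ne ε ∞ with rfl | hε_top
  · simp
  have hε₂ : 0 < ε / 2 := ENNReal.half_pos hε.ne'
  obtain ⟨C, hC, hu⟩ :=
    h (ε / 2).toReal (ENNReal.toReal_pos hε₂.ne' (ENNReal.div_ne_top hε_top two_ne_zero))
  have hvC : Tendsto (fun i => v i * C) l (𝓝 0) := by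
    simpa using ENNReal.Tendsto.mul_const hv (Or.inr hC)
  filter_upwards [ENNReal.tendsto_nhds_zero.1 hvC (ε / 2) hε₂] with i hi
  calc u i ≤ ENNReal.ofReal (ε / 2).toReal + v i * C := hu i
    _ ≤ ε / 2 + ε / 2 := add_le_add ENNReal.ofReal_toReal_le hi
    _ = ε := ENNReal.add_halves ε

lemma tendsto_mdist_of_tendsto_L1dist {X : Type*} [MeasurableSpace X] [MeasurableEq X]
    {μ : Measure X} [IsProbabilityMeasure μ] {ι : Type*} {l : Filter ι}
    {ρs : ι → X → X → ℝ} {ρ : X → X → ℝ} (hsem : ∀ i, IsSemimetric (ρs i))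
    (hmeas : ∀ i, Measurable (uncurry (ρs i))) (hρ : IsSemimetric ρ) (hadm : Admissible μ ρ)
    (hρi : Integrable (uncurry ρ) (μ.prod μ))
    (hL1 : Tendsto (fun i => L1dist μ (ρs i) ρ) l (𝓝 0)) :
    Tendsto (fun i => mdist μ (ρs i) ρ) l (𝓝 0) := by
  refine ENNReal.tendsto_zero_of_le_ofReal_add_mul hL1 fun e he => ?_
  obtain ⟨C, hC, hle⟩ := hadm.exists_mdist_le hρ hρi (by positivity : 0 < e / 12)
  refine ⟨C, hC, fun i => ?_⟩
  simpa [mul_div_cancel₀] using hle _ (hsem i) (hmeas i)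

lemma L1dist_le_mdist {X : Type*} [MeasurableSpace X] (μ : Measure X) (f g : X → X → ℝ) :
    L1dist μ f g ≤ mdist μ f g :=
  le_sInf fun _ ⟨_, _, _, hdom, hc⟩ =>
    hc ▸ lintegral_mono_ae (hdom.mono fun _ hp => ENNReal.ofReal_le_ofReal hp)

lemma SeqCompactIn.of_tendsto {X : Type*} {d d' : (X → X → ℝ) → (X → X → ℝ) → ℝ≥0∞}
    {M : Set (X → X → ℝ)} (h : SeqCompactIn d M)
    (hdd' : ∀ u : ℕ → X → X → ℝ, (∀ n, u n ∈ M) → ∀ g ∈ M,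
      Tendsto (fun n => d (u n) g) atTop (𝓝 0) → Tendsto (fun n => d' (u n) g) atTop (𝓝 0)) :
    SeqCompactIn d' M := fun u hu =>
  let ⟨g, hg, φ, hφ, hlim⟩ := h u hu
  ⟨g, hg, φ, hφ, hdd' (u ∘ φ) (fun _ => hu _) g hg hlim⟩

/-- a sequence of summable measurable semimetrics converging in
`L¹(X×X, μ×μ)` to an admissible summable semimetric also converges to it in the m-norm;
consequently, a set of admissible summable semimetrics is compact in the m-norm if and
only if it is compact in `L¹(X×X, μ×μ)`. -/
theorem statement10 {X : Type*} [MeasurableSpace X] [StandardBorelSpace X]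
    (μ : Measure X) [IsProbabilityMeasure μ] :
    (∀ (ρn : ℕ → X → X → ℝ) (ρ : X → X → ℝ),
      (∀ n, IsSemimetric (ρn n)) → (∀ n, Measurable (Function.uncurry (ρn n))) →
      (∀ n, Integrable (Function.uncurry (ρn n)) (μ.prod μ)) →
      IsSemimetric ρ → Admissible μ ρ → Integrable (Function.uncurry ρ) (μ.prod μ) →
      Tendsto (fun n => L1dist μ (ρn n) ρ) atTop (nhds 0) →
      Tendsto (fun n => mdist μ (ρn n) ρ) atTop (nhds 0)) ∧
    ∀ M : Set (X → X → ℝ),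
      (∀ σ ∈ M, IsSemimetric σ ∧ Admissible μ σ ∧
        Integrable (Function.uncurry σ) (μ.prod μ)) →
      (SeqCompactIn (mdist μ) M ↔ SeqCompactIn (L1dist μ) M) := by
  refine ⟨fun ρn ρ hsem hmeas _ hρ hadm hρi hL1 =>
    tendsto_mdist_of_tendsto_L1dist hsem hmeas hρ hadm hρi hL1,
    fun M hM => ⟨fun h => ?_, fun h => ?_⟩⟩
  · refine h.of_tendsto fun u _ g _ hlim => ?_
    exact tendsto_of_tendsto_of_tendsto_of_le_of_le tendsto_const_nhds hlim (fun _ => zero_le)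
      fun _ => L1dist_le_mdist μ _ _
  · refine h.of_tendsto fun u hu g hg hlim => ?_
    exact tendsto_mdist_of_tendsto_L1dist (fun n => (hM _ (hu n)).1)
      (fun n => (hM _ (hu n)).2.1.1) (hM g hg).1 (hM g hg).2.1 (hM g hg).2.2 hlim
end

section
/- Let (X, μ) be a standard Borel probability space with μ nonatomic, and let ρ be a summable measurable metric on X. For a finite partition λ of X into n measurable sets Δ₁, …, Δ_n of equal measure 1/n, let A_{ρ,λ} be the n×n matrix with entries A_{ρ,λ}(i,j) = n² ∫_{Δ_i×Δ_j} ρ d(μ×μ). If the infimum of (1/n)·tr A_{ρ,λ}, taken over all n and all partitions λ of X into n parts of equal measure, equals 0, then ρ is an admissible metric. -/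
open MeasureTheory Filter Function Set
open scoped ENNReal

/-!
Suppose `n ∑ᵢ ∫_{Δᵢ×Δᵢ} ρ < ε³` for a partition into cells `Δᵢ` of measure `1/n`. By Markov's
inequality the points `x ∈ Δᵢ` whose average distance `n ∫_{Δᵢ} ρ(x, ·)` to their own cell is at
least `ε²` form a set of measure at most `ε`. Any other point of `Δᵢ` is `ε`-close to more than half
of `Δᵢ`, so two such points have a common `ε`-close point in `Δᵢ` and are `2ε`-close. Hence for
every `ε`, off a set of measure `ε`, the space is covered by finitely many sets of `ρ`-diameter
below `2ε`. Borel–Cantelli along `ε = 2⁻ᵐ`, together with one point from each of these sets, gives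
a countable dense subset of a set of full measure.
-/

theorem exists_countable_subset_forall_exists_lt_of_cover {X : Type*} {ρ : X → X → ℝ}
    {C : Set (Set X)} (hC : C.Countable) (hcover : ⋃₀ C = univ) {B : Set X} {ε : ℝ}
    (hsmall : ∀ T ∈ C, ∀ x ∈ T \ B, ∀ y ∈ T \ B, ρ x y < ε) (S : Set X) :
    ∃ D ⊆ S, D.Countable ∧ ∀ x ∈ S \ B, ∃ y ∈ D, ρ x y < ε := by
  refine ⟨⋃ T ∈ C, ⋃ h : (T ∩ (S \ B)).Nonempty, {h.some},
    iUnion₂_subset fun T _ => iUnion_subset fun h => singleton_subset_iff.mpr h.some_mem.2.1,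
    hC.biUnion fun T _ => countable_iUnion fun _ => countable_singleton _, ?_⟩
  intro x hx
  obtain ⟨T, hTC, hxT⟩ : ∃ T ∈ C, x ∈ T := by
    rw [← mem_sUnion, hcover]
    trivial
  have hne : (T ∩ (S \ B)).Nonempty := ⟨x, hxT, hx⟩
  exact ⟨hne.some, mem_biUnion hTC (mem_iUnion_of_mem hne rfl),
    hsmall T hTC x ⟨hxT, hx.2⟩ _ ⟨hne.some_mem.1, hne.some_mem.2.2⟩⟩

section

variable {X : Type*} [MeasurableSpace X] {μ : Measure X}

theorem mul_measure_inter_le_setLIntegral {f : X → ℝ≥0∞} (hf : Measurable f) (s : Set X)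
    (c : ℝ≥0∞) : c * μ (s ∩ {x | c ≤ f x}) ≤ ∫⁻ x in s, f x ∂μ := by
  calc c * μ (s ∩ {x | c ≤ f x})
      ≤ c * μ.restrict s {x | c ≤ f x} := by
        gcongr c * ?_; rw [inter_comm]; exact Measure.le_restrict_apply _ _
    _ ≤ ∫⁻ x in s, f x ∂μ := mul_meas_ge_le_lintegral₀ hf.aemeasurable c

theorem mul_measure_iUnion_inter_le_sum_setLIntegral {ι : Type*} [Fintype ι] (s : ι → Set X)
    {f : ι → X → ℝ≥0∞} (hf : ∀ i, Measurable (f i)) (c : ℝ≥0∞) :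
    c * μ (⋃ i, s i ∩ {x | c ≤ f i x}) ≤ ∑ i, ∫⁻ x in s i, f i x ∂μ := by
  calc c * μ (⋃ i, s i ∩ {x | c ≤ f i x})
      ≤ c * ∑ i, μ (s i ∩ {x | c ≤ f i x}) := by gcongr; exact measure_iUnion_fintype_le _ _
    _ = ∑ i, c * μ (s i ∩ {x | c ≤ f i x}) := Finset.mul_sum _ _ _
    _ ≤ ∑ i, ∫⁻ x in s i, f i x ∂μ :=
        Finset.sum_le_sum fun i _ => mul_measure_inter_le_setLIntegral (hf i) (s i) c

theorem exists_mem_lt_lt_of_measure_add_lt {s : Set X} {f g : X → ℝ≥0∞} {c : ℝ≥0∞}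
    (h : μ (s ∩ {y | c ≤ f y}) + μ (s ∩ {y | c ≤ g y}) < μ s) :
    ∃ y ∈ s, f y < c ∧ g y < c := by
  by_contra! hcon
  have hsub : s ⊆ (s ∩ {y | c ≤ f y}) ∪ (s ∩ {y | c ≤ g y}) := by
    intro y hy
    rcases le_or_gt c (f y) with hf | hf
    · exact Or.inl ⟨hy, hf⟩
    · exact Or.inr ⟨hy, hcon y hy hf⟩
  exact (measure_mono hsub |>.trans (measure_union_le _ _)).not_gt h

variable {ρ : X → X → ℝ}

theorem IsSemimetric.lt_of_setLIntegral_lt (hρ : IsSemimetric ρ)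
    (hmeas : Measurable (uncurry ρ)) {s : Set X} {ε : ℝ} (hε : 0 < ε) (hε' : ε ≤ 1 / 2)
    {x x' : X} (hx : ∫⁻ y in s, ENNReal.ofReal (ρ x y) ∂μ < ENNReal.ofReal (ε ^ 2) * μ s)
    (hx' : ∫⁻ y in s, ENNReal.ofReal (ρ x' y) ∂μ < ENNReal.ofReal (ε ^ 2) * μ s) :
    ρ x x' < 2 * ε := by
  have hfar : ∀ z, ∫⁻ y in s, ENNReal.ofReal (ρ z y) ∂μ < ENNReal.ofReal (ε ^ 2) * μ s →
      μ (s ∩ {y | ENNReal.ofReal ε ≤ ENNReal.ofReal (ρ z y)}) < ENNReal.ofReal ε * μ s := by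
    intro z hz
    have hmark := mul_measure_inter_le_setLIntegral (μ := μ)
      (hmeas.comp (measurable_prodMk_left (x := z))).ennreal_ofReal s (ENNReal.ofReal ε)
    rw [pow_two, ENNReal.ofReal_mul hε.le, mul_assoc] at hz
    exact lt_of_mul_lt_mul_left' (hmark.trans_lt hz)
  have hhalf : ENNReal.ofReal ε * μ s + ENNReal.ofReal ε * μ s ≤ μ s := by
    rw [← add_mul, ← ENNReal.ofReal_add hε.le hε.le]
    exact mul_le_of_le_one_left' (ENNReal.ofReal_le_one.mpr (by linarith))
  obtain ⟨y, -, hxy, hx'y⟩ := exists_mem_lt_lt_of_measure_add_lt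
    ((ENNReal.add_lt_add (hfar x hx) (hfar x' hx')).trans_le hhalf)
  rw [ENNReal.ofReal_lt_ofReal_iff hε] at hxy hx'y
  calc ρ x x' ≤ ρ x y + ρ y x' := hρ.2.2.2 x y x'
    _ = ρ x y + ρ x' y := by rw [hρ.2.2.1 y x']
    _ < 2 * ε := by linarith

theorem IsSemimetric.exists_measure_le_forall_lt_of_trace_lt {ι : Type*} [Fintype ι] [SFinite μ]
    (hρ : IsSemimetric ρ) (hmeas : Measurable (uncurry ρ)) {Δ : ι → Set X} {w : ℝ≥0∞}
    (hΔ : ∀ i, μ (Δ i) = w) {ε : ℝ} (hε : 0 < ε) (hε' : ε ≤ 1 / 2)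
    (htrace : ∑ i, ∫⁻ q in Δ i ×ˢ Δ i, ENNReal.ofReal (ρ q.1 q.2) ∂μ.prod μ <
      ENNReal.ofReal (ε ^ 3) * w) :
    ∃ B : Set X, μ B ≤ ENNReal.ofReal ε ∧ ∀ i, ∀ x ∈ Δ i \ B, ∀ x' ∈ Δ i \ B, ρ x x' < 2 * ε := by
  set F : ι → X → ℝ≥0∞ := fun i x => ∫⁻ y in Δ i, ENNReal.ofReal (ρ x y) ∂μ
  set c := ENNReal.ofReal (ε ^ 2) * w
  refine ⟨⋃ i, Δ i ∩ {x | c ≤ F i x}, ?_, ?_⟩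
  · have hF : ∀ i, Measurable (F i) := fun i => hmeas.ennreal_ofReal.lintegral_prod_right'
    have hsum : ∑ i, ∫⁻ x in Δ i, F i x ∂μ < c * ENNReal.ofReal ε := by
      have hc : ENNReal.ofReal (ε ^ 3) * w = c * ENNReal.ofReal ε := by
        rw [mul_right_comm, ← ENNReal.ofReal_mul (by positivity), ← pow_succ]
      have hiter : ∀ i, ∫⁻ q in Δ i ×ˢ Δ i, ENNReal.ofReal (ρ q.1 q.2) ∂μ.prod μ =
          ∫⁻ x in Δ i, F i x ∂μ := fun i =>
        setLIntegral_prod _ hmeas.ennreal_ofReal.aemeasurable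
      simpa only [hiter, hc] using htrace
    exact (lt_of_mul_lt_mul_left'
      ((mul_measure_iUnion_inter_le_sum_setLIntegral Δ hF c).trans_lt hsum)).le
  · have hgood : ∀ i, ∀ z ∈ Δ i \ ⋃ j, Δ j ∩ {x | c ≤ F j x},
        F i z < ENNReal.ofReal (ε ^ 2) * μ (Δ i) := by
      rintro i z ⟨hz, hzB⟩
      rw [hΔ]
      exact not_le.mp fun hc => hzB (mem_iUnion_of_mem i ⟨hz, hc⟩)
    intro i x hx x' hx'
    exact hρ.lt_of_setLIntegral_lt hmeas hε hε' (hgood i x hx) (hgood i x' hx')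

theorem exists_separableOn_of_forall_exists_cover
    (h : ∀ ε > 0, ∃ B : Set X, μ B ≤ ENNReal.ofReal ε ∧ ∃ C : Set (Set X), C.Countable ∧
      ⋃₀ C = univ ∧ ∀ T ∈ C, ∀ x ∈ T \ B, ∀ y ∈ T \ B, ρ x y < ε) :
    ∃ S, MeasurableSet S ∧ μ Sᶜ = 0 ∧ SeparableOn ρ S := by
  choose B hB C hC hcover hsmall using fun m : ℕ => h ((1 / 2) ^ m) (by positivity)
  have hlimsup : μ (limsup B atTop) = 0 := by
    refine measure_limsup_atTop_eq_zero (ne_top_of_le_ne_top ?_ (ENNReal.tsum_le_tsum hB))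
    simp only [one_div, ENNReal.ofReal_pow (by norm_num : (0 : ℝ) ≤ 2⁻¹),
      ENNReal.ofReal_inv_of_pos two_pos, ENNReal.ofReal_ofNat, ENNReal.tsum_geometric,
      ENNReal.one_sub_inv_two, inv_inv]
    exact ENNReal.ofNat_ne_top
  -- The dense set is chosen inside `S`, so its own measurability is never needed.
  set S := (toMeasurable μ (limsup B atTop))ᶜ
  choose D hDS hDc hD using fun m =>
    exists_countable_subset_forall_exists_lt_of_cover (hC m) (hcover m) (hsmall m) S
  refine ⟨S, (measurableSet_toMeasurable _ _).compl,
    by rw [compl_compl, measure_toMeasurable, hlimsup], ⋃ m, D m, iUnion_subset hDS,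
    countable_iUnion hDc, fun x hx ε hε => ?_⟩
  have hgood : ∀ᶠ m in atTop, x ∉ B m := by
    have hx' : x ∉ limsup B atTop := fun h => hx (subset_toMeasurable _ _ h)
    rwa [mem_limsup_iff_frequently_mem, not_frequently] at hx'
  obtain ⟨m, hxB, hm⟩ := (hgood.and ((tendsto_pow_atTop_nhds_zero_of_lt_one
    (by norm_num) (by norm_num : (1 / 2 : ℝ) < 1)).eventually (gt_mem_nhds hε))).exists
  obtain ⟨y, hy, hxy⟩ := hD m x ⟨hx, hxB⟩
  exact ⟨y, mem_iUnion_of_mem m hy, hxy.trans hm⟩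

end

theorem statement15_general {X : Type*} [MeasurableSpace X]
    (μ : Measure X) [IsProbabilityMeasure μ]
    (ρ : X → X → ℝ) (hρ : IsMetricFun ρ) (hmeas : Measurable (Function.uncurry ρ))
    (hinf : ∀ c : ℝ, 0 < c → ∃ (n : ℕ) (Δ : Fin n → Set X), 1 ≤ n ∧
      (∀ i, MeasurableSet (Δ i)) ∧ (⋃ i, Δ i) = Set.univ ∧
      (∀ i j, i ≠ j → Disjoint (Δ i) (Δ j)) ∧ (∀ i, μ (Δ i) = (n : ℝ≥0∞)⁻¹) ∧
      (n : ℝ≥0∞) *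
          (∑ i, ∫⁻ q in Δ i ×ˢ Δ i, ENNReal.ofReal (ρ q.1 q.2) ∂(μ.prod μ)) <
        ENNReal.ofReal c) :
    Admissible μ ρ := by
  refine ⟨hmeas, exists_separableOn_of_forall_exists_cover fun ε hε => ?_⟩
  set δ := min (ε / 2) (1 / 2)
  have hδε : 2 * δ ≤ ε := by linarith [min_le_left (ε / 2) (1 / 2)]
  have hδ : 0 < δ := by positivity
  obtain ⟨n, Δ, hn, -, hcover, -, hΔ, htrace⟩ := hinf (δ ^ 3) (by positivity)
  have htrace' : ∑ i, ∫⁻ q in Δ i ×ˢ Δ i, ENNReal.ofReal (ρ q.1 q.2) ∂(μ.prod μ) <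
      ENNReal.ofReal (δ ^ 3) * (n : ℝ≥0∞)⁻¹ := by
    rwa [← div_eq_mul_inv, ENNReal.lt_div_iff_mul_lt (.inl (Nat.cast_ne_zero.mpr (by omega)))
      (.inl (ENNReal.natCast_ne_top n)), mul_comm]
  obtain ⟨B, hB, hsmall⟩ :=
    hρ.1.exists_measure_le_forall_lt_of_trace_lt hmeas hΔ hδ (min_le_right _ _) htrace'
  refine ⟨B, hB.trans (ENNReal.ofReal_le_ofReal (by linarith)), range Δ, countable_range Δ,
    by rwa [sUnion_range], ?_⟩
  rintro _ ⟨i, rfl⟩ x hx y hy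
  linarith [hsmall i x hx y hy]

/-- if the infimum over all `n` and all partitions of `X` into `n` parts of
equal measure of the normalized trace `(1/n)·tr A_{ρ,λ} = n ∑_i ∫_{Δ_i×Δ_i} ρ` is `0`,
then the summable measurable metric `ρ` is admissible. -/
theorem statement15 {X : Type*} [MeasurableSpace X] [StandardBorelSpace X]
    (μ : Measure X) [IsProbabilityMeasure μ] [NullSingletonClass μ]
    (ρ : X → X → ℝ) (hρ : IsMetricFun ρ) (hmeas : Measurable (Function.uncurry ρ))
    (hint : Integrable (Function.uncurry ρ) (μ.prod μ))
    (hinf : ∀ c : ℝ, 0 < c → ∃ (n : ℕ) (Δ : Fin n → Set X), 1 ≤ n ∧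
      (∀ i, MeasurableSet (Δ i)) ∧ (⋃ i, Δ i) = Set.univ ∧
      (∀ i j, i ≠ j → Disjoint (Δ i) (Δ j)) ∧ (∀ i, μ (Δ i) = (n : ℝ≥0∞)⁻¹) ∧
      (n : ℝ≥0∞) *
          (∑ i, ∫⁻ q in Δ i ×ˢ Δ i, ENNReal.ofReal (ρ q.1 q.2) ∂(μ.prod μ)) <
        ENNReal.ofReal c) :
    Admissible μ ρ :=
  statement15_general μ ρ hρ hmeas hinf
end
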